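/- arXiv:2209.08813 — 4 statements merged into one kernel-verified Lean document; each statement's English description precedes it below -/
import Mathlib

section
/- For every integer n ≥ 2, there is a well-defined group homomorphism ρ : J_n → D_n ⋊ S_n determined by ρ(s_{p,q}) = (τ_{[p,q]}, w_{p,q}) for all 1 ≤ p < q ≤ n, and this homomorphism is injective. -/
/-- The set of intervals `[p,q]`, `1 ≤ p < q ≤ n`, indexing the generators `s_{p,q}`
of the cactus group `J_n`. -/
def cactusSet (n : ℕ) : Set (ℕ × ℕ) := {pq | 1 ≤ pq.1 ∧ pq.1 < pq.2 ∧ pq.2 ≤ n}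

/-- The defining relations (j1)-(j3) of the cactus group, restricted to a collection `C`
of generating intervals: exactly those cactus relations involving only generators from `C`. -/
def cactusRels (C : Set (ℕ × ℕ)) : Set (FreeGroup C) :=
  {w | (∃ a : C, w = FreeGroup.of a * FreeGroup.of a) ∨
    (∃ a b : C, (a.1.2 < b.1.1 ∨ b.1.2 < a.1.1) ∧
      w = FreeGroup.of a * FreeGroup.of b * (FreeGroup.of a)⁻¹ * (FreeGroup.of b)⁻¹) ∨
    (∃ a b c : C, a.1.1 ≤ b.1.1 ∧ b.1.2 ≤ a.1.2 ∧
      c.1.1 = a.1.1 + a.1.2 - b.1.2 ∧ c.1.2 = a.1.1 + a.1.2 - b.1.1 ∧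
      w = FreeGroup.of a * FreeGroup.of b * (FreeGroup.of a)⁻¹ * (FreeGroup.of c)⁻¹)}

/-- The group presented by the generators `s_I`, `I ∈ C`, and those cactus relations
involving only these generators. -/
abbrev PartialCactusGroup (C : Set (ℕ × ℕ)) := PresentedGroup (cactusRels C)

/-- The cactus group `J_n`. -/
abbrev CactusGroup (n : ℕ) := PartialCactusGroup (cactusSet n)

/-- The involution of `{0,…,n-1}` underlying the permutation `w_{p,q}` (in `1`-based labelling:
the point `i` corresponds to the label `i+1 ∈ {1,…,n}`): it sends a label `i` with `p ≤ i ≤ q`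
to `p + q - i` and fixes all other labels. -/
def wFun (n p q : ℕ) (i : Fin n) : Fin n :=
  if h : 1 ≤ p ∧ p ≤ (i : ℕ) + 1 ∧ (i : ℕ) + 1 ≤ q ∧ q ≤ n then
    ⟨p + q - ((i : ℕ) + 1) - 1, by omega⟩
  else i

lemma wFun_involutive (n p q : ℕ) : Function.Involutive (wFun n p q) := by
  intro i
  unfold wFun
  by_cases h : 1 ≤ p ∧ p ≤ (i : ℕ) + 1 ∧ (i : ℕ) + 1 ≤ q ∧ q ≤ n
  · rw [dif_pos h, dif_pos (by simp only [Fin.val_mk]; omega)]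
    apply Fin.ext
    simp only [Fin.val_mk]
    omega
  · rw [dif_neg h, dif_neg h]

/-- The permutation `w_{p,q}` of `{1,…,n}` (coded on `Fin n` via `i ↦ i+1`), sending `i` to
`p+q-i` for `p ≤ i ≤ q` and fixing all other points. -/
def wPerm (n p q : ℕ) : Equiv.Perm (Fin n) :=
  Function.Involutive.toPerm (wFun n p q) (wFun_involutive n p q)

/-- The subset `{p, p+1, …, q}` of `{1,…,n}`, coded inside `Fin n` via `i ↦ i+1`. -/
def intervalFinset (n p q : ℕ) : Finset (Fin n) :=
  Finset.univ.filter (fun i => p ≤ (i : ℕ) + 1 ∧ (i : ℕ) + 1 ≤ q)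

lemma two_le_intervalFinset_card {n p q : ℕ} (h : (p, q) ∈ cactusSet n) :
    2 ≤ (intervalFinset n p q).card := by
  obtain ⟨h1, h2, h3⟩ := h
  have hp : (⟨p - 1, by omega⟩ : Fin n) ∈ intervalFinset n p q := by
    simp only [intervalFinset, Finset.mem_filter, Finset.mem_univ, true_and]
    omega
  have hq : (⟨q - 1, by omega⟩ : Fin n) ∈ intervalFinset n p q := by
    simp only [intervalFinset, Finset.mem_filter, Finset.mem_univ, true_and]
    omega
  have := Finset.one_lt_card.mpr ⟨_, hp, _, hq, by simp only [ne_eq, Fin.mk.injEq]; omega⟩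
  omega

lemma intervalFinset_card {n p q : ℕ} (h1 : 1 ≤ p) (h3 : q ≤ n) :
    (intervalFinset n p q).card = q + 1 - p := by
  have himg : (intervalFinset n p q).image Fin.val = Finset.Ico (p - 1) q := by
    ext x
    simp only [intervalFinset, Finset.mem_image, Finset.mem_filter, Finset.mem_univ, true_and,
      Finset.mem_Ico]
    constructor
    · rintro ⟨i, hi, rfl⟩
      omega
    · rintro ⟨hx1, hx2⟩
      exact ⟨⟨x, by omega⟩, by simp only [Fin.val_mk]; omega, rfl⟩
  have hcard : (intervalFinset n p q).card = (Finset.Ico (p - 1) q).card := by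
    rw [← himg, Finset.card_image_of_injective _ Fin.val_injective]
  rw [hcard, Nat.card_Ico]
  omega

/-- Generators of the Gauss diagram group `D_n`: subsets of `{1,…,n}` of size at least `2`. -/
abbrev GaussGen (n : ℕ) := {I : Finset (Fin n) // 2 ≤ I.card}

/-- The defining relations (d1)-(d2) of the Gauss diagram group `D_n`. -/
def gaussRels (n : ℕ) : Set (FreeGroup (GaussGen n)) :=
  {w | (∃ a : GaussGen n, w = FreeGroup.of a * FreeGroup.of a) ∨
    (∃ a b : GaussGen n, (Disjoint a.1 b.1 ∨ a.1 ⊆ b.1) ∧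
      w = FreeGroup.of a * FreeGroup.of b * (FreeGroup.of a)⁻¹ * (FreeGroup.of b)⁻¹)}

/-- Mostovoy's Gauss diagram group `D_n`, a right-angled Coxeter group. -/
abbrev GaussGroup (n : ℕ) := PresentedGroup (gaussRels n)

lemma gaussRel_one {n : ℕ} {r : FreeGroup (GaussGen n)} (h : r ∈ gaussRels n) :
    PresentedGroup.mk (gaussRels n) r = 1 :=
  (QuotientGroup.eq_one_iff _).mpr (Subgroup.subset_normalClosure h)

/-- The action of a permutation on the generators of `D_n`: `σ • τ_I = τ_{σ(I)}`. -/
def permGen (n : ℕ) (σ : Equiv.Perm (Fin n)) (a : GaussGen n) : GaussGen n :=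
  ⟨a.1.image σ, by rw [Finset.card_image_of_injective _ σ.injective]; exact a.2⟩

lemma permGen_rels (n : ℕ) (σ : Equiv.Perm (Fin n)) : ∀ r ∈ gaussRels n,
    FreeGroup.lift (fun a => (PresentedGroup.of (rels := gaussRels n) (permGen n σ a))) r = 1 := by
  rintro r (⟨a, rfl⟩ | ⟨a, b, hab, rfl⟩)
  · have h1 : (PresentedGroup.mk (gaussRels n))
        (FreeGroup.of (permGen n σ a) * FreeGroup.of (permGen n σ a)) = 1 :=
      gaussRel_one (Or.inl ⟨permGen n σ a, rfl⟩)
    rw [map_mul] at h1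
    simpa [PresentedGroup.of] using h1
  · have hab' : Disjoint (permGen n σ a).1 (permGen n σ b).1 ∨
        (permGen n σ a).1 ⊆ (permGen n σ b).1 := by
      rcases hab with h | h
      · exact Or.inl ((Finset.disjoint_image σ.injective).mpr h)
      · exact Or.inr (Finset.image_subset_image h)
    have h1 : (PresentedGroup.mk (gaussRels n))
        (FreeGroup.of (permGen n σ a) * FreeGroup.of (permGen n σ b) *
          (FreeGroup.of (permGen n σ a))⁻¹ * (FreeGroup.of (permGen n σ b))⁻¹) = 1 :=
      gaussRel_one (Or.inr ⟨permGen n σ a, permGen n σ b, hab', rfl⟩)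
    rw [map_mul, map_mul, map_mul, map_inv, map_inv] at h1
    simpa [PresentedGroup.of] using h1

/-- The endomorphism of `D_n` induced by a permutation. -/
def permHom (n : ℕ) (σ : Equiv.Perm (Fin n)) : GaussGroup n →* GaussGroup n :=
  PresentedGroup.toGroup (permGen_rels n σ)

lemma permHom_of (n : ℕ) (σ : Equiv.Perm (Fin n)) (a : GaussGen n) :
    permHom n σ (PresentedGroup.of a) = PresentedGroup.of (permGen n σ a) :=
  PresentedGroup.toGroup.of _

lemma permHom_comp (n : ℕ) (σ τ : Equiv.Perm (Fin n)) :
    (permHom n σ).comp (permHom n τ) = permHom n (σ * τ) := by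
  ext x
  simp only [MonoidHom.comp_apply, permHom_of]
  congr 1
  apply Subtype.ext
  simp only [permGen, Finset.image_image]
  rfl

lemma permHom_one (n : ℕ) : permHom n 1 = MonoidHom.id (GaussGroup n) := by
  ext x
  simp only [MonoidHom.id_apply, permHom_of]
  congr 1
  apply Subtype.ext
  simp [permGen]

lemma permHom_apply_apply (n : ℕ) (σ τ : Equiv.Perm (Fin n)) (x : GaussGroup n) :
    permHom n σ (permHom n τ x) = permHom n (σ * τ) x :=
  DFunLike.congr_fun (permHom_comp n σ τ) x

/-- The action of `S_n` on `D_n` by `σ • τ_I = τ_{σ(I)}`, as a homomorphism to automorphisms. -/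
def permAut (n : ℕ) : Equiv.Perm (Fin n) →* MulAut (GaussGroup n) where
  toFun σ :=
    { toFun := permHom n σ
      invFun := permHom n σ⁻¹
      left_inv := fun x => by
        rw [permHom_apply_apply, inv_mul_cancel, permHom_one, MonoidHom.id_apply]
      right_inv := fun x => by
        rw [permHom_apply_apply, mul_inv_cancel, permHom_one, MonoidHom.id_apply]
      map_mul' := map_mul _ }
  map_one' := by
    apply MulEquiv.ext
    intro x
    simp only [MulEquiv.coe_mk, Equiv.coe_fn_mk]
    rw [permHom_one]
    rfl
  map_mul' := fun σ τ => by
    apply MulEquiv.ext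
    intro x
    simp only [MulEquiv.coe_mk, Equiv.coe_fn_mk, MulAut.mul_apply]
    exact (permHom_apply_apply n σ τ x).symm

/-!
`ρ` is well defined because `w_{p,q}` maps every interval nested in, containing or disjoint
from `[p,q]` to an interval, in a way that turns (j1)-(j3) into relations of `D_n ⋊ S_n`.

For injectivity, write `x ∈ J_n` as a word `s_{a₁} ⋯ s_{aₖ}`. The `D_n`-component of `ρ x` is
the product of the Gauss word `τ_{I₁} ⋯ τ_{Iₖ}` with `Iᵢ = w_{a₁} ⋯ w_{aᵢ₋₁} (aᵢ)`. Since `D_n` is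
a right-angled Coxeter group, if `ρ x = 1` this word reduces to the empty word by swapping
adjacent commuting letters and cancelling squares (Tits; this follows from the action of the
generators on reduced words modulo swaps). Every such move lifts to the cactus word: a swap of
commuting letters is one of the relations (j2), (j3), and a square `τ_I τ_I` comes from a square
`s_a s_a`. The lifted cactus words all represent `x`, and the last one is empty.
-/

namespace PresentedGroup

variable {α : Type*} {rels : Set (FreeGroup α)}

lemma of_mul_self_of_mem {a : α} (h : .of a * .of a ∈ rels) :
    (of a : PresentedGroup rels) * of a = 1 :=
  one_of_mem h

lemma of_mul_of_eq_of_mem {a b c d : α} (h : .of a * .of b * (.of c)⁻¹ * (.of d)⁻¹ ∈ rels) :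
    (of a : PresentedGroup rels) * of b = of d * of c := by
  have h1 : (of a : PresentedGroup rels) * of b * (of c)⁻¹ * (of d)⁻¹ = 1 := one_of_mem h
  rwa [mul_inv_eq_one, mul_inv_eq_iff_eq_mul] at h1

end PresentedGroup

lemma exists_list_map_prod_eq {G ι : Type*} [Group G] (f : ι → G) (hf : ∀ i, f i * f i = 1)
    (hgen : Subgroup.closure (Set.range f) = ⊤) (x : G) : ∃ l : List ι, (l.map f).prod = x := by
  have hx : x ∈ Subgroup.closure (Set.range f) := hgen ▸ Subgroup.mem_top x
  induction hx using Subgroup.closure_induction with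
  | mem _ h => obtain ⟨i, rfl⟩ := h; exact ⟨[i], by simp⟩
  | one => exact ⟨[], rfl⟩
  | mul _ _ _ _ h₁ h₂ =>
    obtain ⟨l₁, rfl⟩ := h₁
    obtain ⟨l₂, rfl⟩ := h₂
    exact ⟨l₁ ++ l₂, by simp⟩
  | inv _ _ h =>
    obtain ⟨l, rfl⟩ := h
    refine ⟨l.reverse, ?_⟩
    rw [List.prod_inv_reverse, List.map_reverse, List.map_map]
    congr 2
    exact List.map_congr_left fun i _ => (inv_eq_of_mul_eq_one_left (hf i)).symm


namespace RightAngled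

variable {V : Type*} {adj : V → V → Prop} {a b : V} {l l' m : List V}

def Swap (adj : V → V → Prop) (l l' : List V) : Prop :=
  ∃ u v c d, adj c d ∧ l = u ++ c :: d :: v ∧ l' = u ++ d :: c :: v

abbrev SwapEquiv (adj : V → V → Prop) : List V → List V → Prop :=
  Relation.ReflTransGen (Swap adj)

def HasSquare (l : List V) : Prop := ∃ u v x, l = u ++ x :: x :: v

def Cancel (l l' : List V) : Prop := ∃ u v x, l = u ++ x :: x :: v ∧ l' = u ++ v

def Move (adj : V → V → Prop) (l l' : List V) : Prop := Swap adj l l' ∨ Cancel l l'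

def Reduced (adj : V → V → Prop) (l : List V) : Prop :=
  ∀ l', SwapEquiv adj l l' → ¬ HasSquare l'

def Exposed (adj : V → V → Prop) (a : V) (l : List V) : Prop := ∃ m, SwapEquiv adj l (a :: m)

lemma Swap.append_left (u : List V) (h : Swap adj l l') : Swap adj (u ++ l) (u ++ l') := by
  obtain ⟨w, v, c, d, hcd, rfl, rfl⟩ := h
  exact ⟨u ++ w, v, c, d, hcd, by simp, by simp⟩

lemma SwapEquiv.append_left (u : List V) (h : SwapEquiv adj l l') :
    SwapEquiv adj (u ++ l) (u ++ l') :=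
  Relation.ReflTransGen.lift (u ++ ·) (fun _ _ => Swap.append_left u) _ _ h

lemma SwapEquiv.cons (a : V) (h : SwapEquiv adj l l') : SwapEquiv adj (a :: l) (a :: l') :=
  h.append_left [a]

lemma SwapEquiv.perm (h : SwapEquiv adj l l') : l.Perm l' := by
  induction h with
  | refl => rfl
  | tail _ hs ih =>
    obtain ⟨u, v, c, d, -, rfl, rfl⟩ := hs
    exact ih.trans ((List.Perm.swap d c v).append_left u)

lemma SwapEquiv.symm [Std.Symm adj] (h : SwapEquiv adj l l') : SwapEquiv adj l' l := by
  induction h with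
  | refl => rfl
  | tail _ hst ih =>
    obtain ⟨u, v, c, d, hcd, rfl, rfl⟩ := hst
    exact Relation.ReflTransGen.head ⟨u, v, d, c, symm_of adj hcd, rfl, rfl⟩ ih

lemma swapEquiv_append_cons {u : List V} (v : List V) (hu : ∀ y ∈ u, adj y a) :
    SwapEquiv adj (u ++ a :: v) (a :: (u ++ v)) := by
  induction u with
  | nil => rfl
  | cons y u ih =>
    refine (ih fun z hz => hu z (.tail _ hz)).cons y |>.tail ?_
    exact ⟨[], u ++ v, y, a, hu y (.head _), rfl, rfl⟩

lemma Swap.erase [DecidableEq V] (a : V) (h : Swap adj l l') :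
    SwapEquiv adj (l.erase a) (l'.erase a) := by
  obtain ⟨u, v, c, d, hcd, rfl, rfl⟩ := h
  by_cases ha : a ∈ u
  · rw [List.erase_append_left _ ha, List.erase_append_left _ ha]
    exact .single ⟨u.erase a, v, c, d, hcd, rfl, rfl⟩
  rw [List.erase_append_right _ ha, List.erase_append_right _ ha]
  refine SwapEquiv.append_left u ?_
  by_cases hc : c = a <;> by_cases hd : d = a
  · subst hc hd; rfl
  all_goals simp only [List.erase_cons, beq_iff_eq, hc, hd, if_true, if_false]
  · rfl
  · rfl
  · exact .single ⟨[], v.erase a, c, d, hcd, rfl, rfl⟩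

lemma SwapEquiv.erase [DecidableEq V] (a : V) (h : SwapEquiv adj l l') :
    SwapEquiv adj (l.erase a) (l'.erase a) := by
  induction h with
  | refl => rfl
  | tail _ hst ih => exact ih.trans (hst.erase a)

lemma SwapEquiv.of_cons_cons (h : SwapEquiv adj (a :: l) (a :: l')) : SwapEquiv adj l l' := by
  classical
  simpa using h.erase a

lemma Exposed.of_cons (hab : b ≠ a) (h : Exposed adj a (b :: l)) : Exposed adj a l := by
  classical
  obtain ⟨m, hm⟩ := h
  exact ⟨m.erase b, by simpa [List.erase_cons, Ne.symm hab] using hm.erase b⟩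

lemma takeWhile_append_of_not_mem [DecidableEq V] {u : List V} (ha : a ∉ u) (w : List V) :
    (u ++ w).takeWhile (· != a) = u ++ w.takeWhile (· != a) :=
  List.takeWhile_append_of_pos fun y hy => by simpa using ne_of_mem_of_not_mem hy ha

lemma Swap.forall_adj_takeWhile [DecidableEq V] [Std.Symm adj] (h : Swap adj l l')
    (hl : ∀ y ∈ l.takeWhile (· != a), adj y a) : ∀ y ∈ l'.takeWhile (· != a), adj y a := by
  obtain ⟨u, v, c, d, hcd, rfl, rfl⟩ := h
  by_cases ha : a ∈ u
  · obtain ⟨u₁, u₂, ha₁, rfl, -⟩ := List.exists_erase_eq ha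
    simpa [takeWhile_append_of_not_mem ha₁] using hl
  simp only [takeWhile_append_of_not_mem ha, List.mem_append] at hl ⊢
  rintro y (hy | hy)
  · exact hl y (.inl hy)
  by_cases hd : d = a
  · simp [hd] at hy
  by_cases hc : c = a
  · subst hc
    obtain rfl : y = d := by simpa [hd] using hy
    exact symm_of adj hcd
  refine hl y (.inr ?_)
  simp only [List.takeWhile_cons, bne_iff_ne, ne_eq, hc, hd, not_false_eq_true, if_true,
    List.mem_cons] at hy ⊢
  tauto

lemma forall_adj_takeWhile_of_swapEquiv [DecidableEq V] [Std.Symm adj] {w : List V}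
    (h : SwapEquiv adj (a :: m) w) : ∀ y ∈ w.takeWhile (· != a), adj y a := by
  induction h with
  | refl => simp
  | tail _ hst ih => exact hst.forall_adj_takeWhile ih

lemma Exposed.swapEquiv [Std.Symm adj] (h : Exposed adj a l) (hl : SwapEquiv adj l l') :
    Exposed adj a l' :=
  let ⟨m, hm⟩ := h
  ⟨m, hl.symm.trans hm⟩

lemma reduced_nil : Reduced adj ([] : List V) := by
  rintro w hw ⟨u, v, x, rfl⟩
  simpa using hw.perm.length_eq

lemma Reduced.swapEquiv (hl : Reduced adj l) (h : SwapEquiv adj l l') : Reduced adj l' :=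
  fun w hw => hl w (h.trans hw)

lemma Reduced.tail (h : Reduced adj (a :: l)) : Reduced adj l := by
  rintro w hw ⟨u, v, x, rfl⟩
  exact h _ (hw.cons a) ⟨a :: u, v, x, rfl⟩

lemma Exposed.not_reduced_cons (h : Exposed adj a l) : ¬ Reduced adj (a :: l) := by
  obtain ⟨m, hm⟩ := h
  exact fun hr => hr _ (hm.cons a) ⟨[], m, a, rfl⟩

/-- The square must involve `a` and the first `a` of `l`: erasing the first `a` from a word
swap-equivalent to `a :: l` gives one swap-equivalent to `l`. The letters before that `a` commute
with it, because this holds in `a :: l` and is preserved by swaps. -/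
lemma Reduced.exposed_of_not_reduced_cons [Std.Symm adj] (hl : Reduced adj l)
    (h : ¬ Reduced adj (a :: l)) : Exposed adj a l := by
  classical
  simp only [Reduced, not_forall, not_not] at h
  obtain ⟨w, hw, u, v, x, rfl⟩ := h
  have hl' : SwapEquiv adj l ((u ++ x :: x :: v).erase a) := by simpa using hw.erase a
  have ha : a ∉ u := fun ha => hl _ hl' ⟨u.erase a, v, x, List.erase_append_left _ ha⟩
  rw [List.erase_append_right _ ha] at hl'
  obtain rfl : a = x := by
    by_contra hx
    exact hl _ hl' ⟨u, v.erase a, x, by simp [Ne.symm hx]⟩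
  have hu : ∀ y ∈ u, adj y a := by
    simpa [takeWhile_append_of_not_mem ha] using forall_adj_takeWhile_of_swapEquiv hw
  rw [List.erase_cons_head] at hl'
  exact ⟨u ++ v, hl'.trans (swapEquiv_append_cons v hu)⟩

lemma Reduced.reduced_cons_iff [Std.Symm adj] (hl : Reduced adj l) :
    Reduced adj (a :: l) ↔ ¬ Exposed adj a l :=
  ⟨fun h he => he.not_reduced_cons h, not_imp_comm.mp hl.exposed_of_not_reduced_cons⟩

open scoped Classical in
/-- Tits' action of the generator `a`: cancel `a` against the front of `l` if it can be brought
there by swaps, and put it in front otherwise. -/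
noncomputable def toggle (adj : V → V → Prop) (a : V) (l : List V) : List V :=
  if h : Exposed adj a l then h.choose else a :: l

lemma swapEquiv_cons_toggle (h : Exposed adj a l) : SwapEquiv adj l (a :: toggle adj a l) := by
  classical
  rw [toggle, dif_pos h]
  exact h.choose_spec

lemma toggle_of_not_exposed (h : ¬ Exposed adj a l) : toggle adj a l = a :: l := by
  classical
  exact dif_neg h

lemma toggle_swapEquiv [Std.Symm adj] (h : SwapEquiv adj l (a :: m)) :
    SwapEquiv adj (toggle adj a l) m :=
  SwapEquiv.of_cons_cons ((swapEquiv_cons_toggle ⟨m, h⟩).symm.trans h)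

lemma toggle_congr [Std.Symm adj] (h : SwapEquiv adj l l') :
    SwapEquiv adj (toggle adj a l) (toggle adj a l') := by
  by_cases ha : Exposed adj a l
  · exact toggle_swapEquiv (h.trans (swapEquiv_cons_toggle (ha.swapEquiv h)))
  · rw [toggle_of_not_exposed ha, toggle_of_not_exposed fun h' => ha (h'.swapEquiv h.symm)]
    exact h.cons a

lemma Reduced.toggle [Std.Symm adj] (hl : Reduced adj l) : Reduced adj (toggle adj a l) := by
  by_cases ha : Exposed adj a l
  · exact (hl.swapEquiv (swapEquiv_cons_toggle ha)).tail
  · rwa [toggle_of_not_exposed ha, hl.reduced_cons_iff]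

lemma toggle_toggle [Std.Symm adj] (hl : Reduced adj l) :
    SwapEquiv adj (toggle adj a (toggle adj a l)) l := by
  by_cases ha : Exposed adj a l
  · have hr := hl.swapEquiv (swapEquiv_cons_toggle ha)
    rw [toggle_of_not_exposed fun h => h.not_reduced_cons hr]
    exact (swapEquiv_cons_toggle ha).symm
  · rw [toggle_of_not_exposed ha]
    exact toggle_swapEquiv .refl

lemma toggle_comm_of_exposed [Std.Symm adj] (hab : adj a b) (hne : a ≠ b)
    (ha : Exposed adj a l) :
    SwapEquiv adj (toggle adj a (toggle adj b l)) (toggle adj b (toggle adj a l)) := by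
  have hl := swapEquiv_cons_toggle ha
  by_cases hb : Exposed adj b l
  · obtain ⟨k, hk⟩ := (hb.swapEquiv hl).of_cons hne
    have hbl : SwapEquiv adj l (b :: a :: k) :=
      (hl.trans (hk.cons a)).tail ⟨[], k, a, b, hab, rfl, rfl⟩
    exact (toggle_swapEquiv (toggle_swapEquiv hbl)).trans
      (toggle_swapEquiv (toggle_swapEquiv (hl.trans (hk.cons a)))).symm
  · have hb' : ¬ Exposed adj b (toggle adj a l) := fun ⟨k, hk⟩ =>
      hb ⟨a :: k, (hl.trans (hk.cons a)).tail ⟨[], k, a, b, hab, rfl, rfl⟩⟩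
    rw [toggle_of_not_exposed hb, toggle_of_not_exposed hb']
    exact toggle_swapEquiv ((hl.cons b).tail ⟨[], _, b, a, symm_of adj hab, rfl, rfl⟩)

lemma toggle_comm [Std.Symm adj] (hab : adj a b) :
    SwapEquiv adj (toggle adj a (toggle adj b l)) (toggle adj b (toggle adj a l)) := by
  obtain rfl | hne := eq_or_ne a b
  · rfl
  by_cases ha : Exposed adj a l
  · exact toggle_comm_of_exposed hab hne ha
  by_cases hb : Exposed adj b l
  · exact (toggle_comm_of_exposed (symm_of adj hab) hne.symm hb).symm
  have hab' : ¬ Exposed adj a (b :: l) := fun h => ha (h.of_cons hne.symm)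
  have hba : ¬ Exposed adj b (a :: l) := fun h => hb (h.of_cons hne)
  rw [toggle_of_not_exposed ha, toggle_of_not_exposed hb, toggle_of_not_exposed hab',
    toggle_of_not_exposed hba]
  exact .single ⟨[], l, a, b, hab, rfl, rfl⟩

lemma Move.cons (a : V) (h : Move adj l l') : Move adj (a :: l) (a :: l') := by
  rcases h with ⟨u, v, c, d, hcd, rfl, rfl⟩ | ⟨u, v, x, rfl, rfl⟩
  exacts [.inl ⟨a :: u, v, c, d, hcd, rfl, rfl⟩, .inr ⟨a :: u, v, x, rfl, rfl⟩]

lemma Move.map {W : Type*} {adj' : W → W → Prop} (f : V → W)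
    (hf : ∀ x y, adj x y → adj' (f x) (f y)) (h : Move adj l l') :
    Move adj' (l.map f) (l'.map f) := by
  rcases h with ⟨u, v, c, d, hcd, rfl, rfl⟩ | ⟨u, v, x, rfl, rfl⟩
  · exact .inl ⟨u.map f, v.map f, f c, f d, hf _ _ hcd, by simp, by simp⟩
  · exact .inr ⟨u.map f, v.map f, f x, by simp, by simp⟩

lemma Move.cons_cases {x : V} (h : Move adj (x :: l) l') :
    (∃ l'', Move adj l l'' ∧ l' = x :: l'') ∨
      ∃ y v, l = y :: v ∧ (adj x y ∧ l' = y :: x :: v ∨ x = y ∧ l' = v) := by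
  rcases h with ⟨_ | ⟨z, u⟩, v, c, d, hcd, hl, rfl⟩ | ⟨_ | ⟨z, u⟩, v, y, hl, rfl⟩ <;>
    simp only [List.nil_append, List.cons_append, List.cons.injEq] at hl <;>
    obtain ⟨rfl, rfl⟩ := hl
  · exact .inr ⟨d, v, rfl, .inl ⟨hcd, rfl⟩⟩
  · exact .inl ⟨_, .inl ⟨u, v, c, d, hcd, rfl, rfl⟩, rfl⟩
  · exact .inr ⟨_, _, rfl, .inr ⟨rfl, rfl⟩⟩
  · exact .inl ⟨_, .inr ⟨u, v, y, rfl, rfl⟩, rfl⟩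

def reducedSetoid (adj : V → V → Prop) [Std.Symm adj] :
    Setoid {l : List V // Reduced adj l} where
  r l l' := SwapEquiv adj l l'
  iseqv := ⟨fun _ => .refl, SwapEquiv.symm, Relation.ReflTransGen.trans⟩

abbrev ReducedClass (adj : V → V → Prop) [Std.Symm adj] := Quotient (reducedSetoid adj)

noncomputable def togglePerm (adj : V → V → Prop) [Std.Symm adj] (a : V) :
    Equiv.Perm (ReducedClass adj) :=
  Function.Involutive.toPerm
    (Quotient.map (fun l => ⟨toggle adj a l, l.2.toggle⟩) fun _ _ => toggle_congr)
    (by rintro ⟨l⟩; exact Quotient.sound (toggle_toggle l.2))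

lemma togglePerm_mk [Std.Symm adj] (a : V) (l : {l : List V // Reduced adj l}) :
    togglePerm adj a ⟦l⟧ = ⟦⟨toggle adj a l, l.2.toggle⟩⟧ :=
  rfl

lemma togglePerm_mul_self [Std.Symm adj] (a : V) : togglePerm adj a * togglePerm adj a = 1 :=
  Equiv.ext (Function.Involutive.toPerm_involutive _)

lemma togglePerm_commute [Std.Symm adj] (hab : adj a b) :
    togglePerm adj a * togglePerm adj b = togglePerm adj b * togglePerm adj a := by
  ext ⟨l⟩
  exact Quotient.sound (toggle_comm hab)

theorem exists_moves_to_reduced [Std.Symm adj] (l : List V) :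
    ∃ r : {r : List V // Reduced adj r}, Relation.ReflTransGen (Move adj) l r ∧
      (l.map (togglePerm adj)).prod ⟦⟨[], reduced_nil⟩⟧ = ⟦r⟧ := by
  induction l with
  | nil => exact ⟨⟨[], reduced_nil⟩, .refl, rfl⟩
  | cons a t ih =>
    obtain ⟨⟨r, hr⟩, hmoves, hact⟩ := ih
    have hmoves' : Relation.ReflTransGen (Move adj) (a :: t) (a :: r) :=
      Relation.ReflTransGen.lift (a :: ·) (fun _ _ => Move.cons a) _ _ hmoves
    have hact' : ((a :: t).map (togglePerm adj)).prod ⟦⟨[], reduced_nil⟩⟧ =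
        ⟦⟨toggle adj a r, hr.toggle⟩⟧ := by
      rw [List.map_cons, List.prod_cons, Equiv.Perm.mul_apply, hact, togglePerm_mk]
    by_cases ha : Exposed adj a r
    · refine ⟨⟨toggle adj a r, hr.toggle⟩, hmoves'.trans ?_, hact'⟩
      have hswaps := SwapEquiv.cons a (swapEquiv_cons_toggle ha)
      exact (Relation.ReflTransGen.mono (fun _ _ => Or.inl) _ _ hswaps).tail
        (.inr ⟨[], _, a, rfl, rfl⟩)
    · refine ⟨⟨a :: r, (hr.reduced_cons_iff).mpr ha⟩, hmoves', ?_⟩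
      simp only [hact', toggle_of_not_exposed ha]

/-- Tits' solution of the word problem in right-angled Coxeter groups. -/
theorem moves_nil_of_prod_eq_one [Std.Symm adj] {rels : Set (FreeGroup V)}
    (hrels : ∀ r ∈ rels, (∃ a, r = .of a * .of a) ∨
      ∃ a b, adj a b ∧ r = .of a * .of b * (.of a)⁻¹ * (.of b)⁻¹)
    {l : List V} (h : (l.map (PresentedGroup.of (rels := rels))).prod = 1) :
    Relation.ReflTransGen (Move adj) l [] := by
  let act : PresentedGroup rels →* Equiv.Perm (ReducedClass adj) :=
    PresentedGroup.toGroup (f := togglePerm adj) fun r hr => by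
      rcases hrels r hr with ⟨a, rfl⟩ | ⟨a, b, hab, rfl⟩
      · simp [togglePerm_mul_self]
      · simp [togglePerm_commute hab]
  have hprod : (l.map (togglePerm adj)).prod = 1 := by
    simpa [map_list_prod, act, Function.comp_def] using congrArg act h
  obtain ⟨⟨r, hr⟩, hmoves, hact⟩ := exists_moves_to_reduced (adj := adj) l
  rw [hprod, Equiv.Perm.one_apply] at hact
  obtain rfl : r = [] := List.nil_perm.mp (Quotient.exact hact).perm
  exact hmoves

end RightAngled

section Intervals

variable {n p q : ℕ} {I J : ℕ × ℕ}

lemma mem_intervalFinset {i : Fin n} : i ∈ intervalFinset n p q ↔ p ≤ i + 1 ∧ i + 1 ≤ q := by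
  simp [intervalFinset]

lemma wPerm_val (i : Fin n) :
    (wPerm n p q i : ℕ) =
      if 1 ≤ p ∧ p ≤ i + 1 ∧ i + 1 ≤ q ∧ q ≤ n then p + q - (i + 1) - 1 else i := by
  simp only [wPerm, Function.Involutive.coe_toPerm, wFun]
  split_ifs <;> rfl

lemma wPerm_mul_self : wPerm n p q * wPerm n p q = 1 :=
  Equiv.ext (wFun_involutive n p q)

lemma mem_image_wPerm {s : Finset (Fin n)} {i : Fin n} :
    i ∈ s.image (wPerm n p q) ↔ wPerm n p q i ∈ s := by
  have hinv (j : Fin n) : wPerm n p q (wPerm n p q j) = j := wFun_involutive n p q j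
  exact ⟨fun h => by obtain ⟨j, hj, rfl⟩ := Finset.mem_image.mp h; rwa [hinv],
    fun h => Finset.mem_image.mpr ⟨_, h, hinv i⟩⟩

lemma image_wPerm_intervalFinset_of_le (hI : I ∈ cactusSet n) (h₁ : I.1 ≤ J.1)
    (h₂ : J.2 ≤ I.2) :
    (intervalFinset n J.1 J.2).image (wPerm n I.1 I.2) =
      intervalFinset n (I.1 + I.2 - J.2) (I.1 + I.2 - J.1) := by
  obtain ⟨_, _, _⟩ := hI
  ext i
  rw [mem_image_wPerm, mem_intervalFinset, mem_intervalFinset, wPerm_val]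
  have := i.2
  split_ifs <;> omega

lemma image_wPerm_intervalFinset_of_disjoint (hI : I ∈ cactusSet n)
    (h : I.2 < J.1 ∨ J.2 < I.1) :
    (intervalFinset n J.1 J.2).image (wPerm n I.1 I.2) = intervalFinset n J.1 J.2 := by
  obtain ⟨_, _, _⟩ := hI
  ext i
  rw [mem_image_wPerm, mem_intervalFinset, mem_intervalFinset, wPerm_val]
  have := i.2
  split_ifs <;> omega

lemma image_wPerm_intervalFinset_of_ge (hI : I ∈ cactusSet n) (h₁ : J.1 ≤ I.1)
    (h₂ : I.2 ≤ J.2) :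
    (intervalFinset n J.1 J.2).image (wPerm n I.1 I.2) = intervalFinset n J.1 J.2 := by
  obtain ⟨_, _, _⟩ := hI
  ext i
  rw [mem_image_wPerm, mem_intervalFinset, mem_intervalFinset, wPerm_val]
  have := i.2
  split_ifs <;> omega

lemma wPerm_commute_of_disjoint (hI : I ∈ cactusSet n) (hJ : J ∈ cactusSet n)
    (h : I.2 < J.1 ∨ J.2 < I.1) :
    wPerm n I.1 I.2 * wPerm n J.1 J.2 = wPerm n J.1 J.2 * wPerm n I.1 I.2 := by
  obtain ⟨_, _, _⟩ := hI
  obtain ⟨_, _, _⟩ := hJ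
  refine Equiv.ext fun i => Fin.ext ?_
  have := i.2
  simp only [Equiv.Perm.mul_apply, wPerm_val]
  split_ifs <;> omega

lemma wPerm_mul_wPerm_of_le (hI : I ∈ cactusSet n) (h₁ : I.1 ≤ J.1) (h₂ : J.2 ≤ I.2) :
    wPerm n I.1 I.2 * wPerm n J.1 J.2 =
      wPerm n (I.1 + I.2 - J.2) (I.1 + I.2 - J.1) * wPerm n I.1 I.2 := by
  obtain ⟨_, _, _⟩ := hI
  refine Equiv.ext fun i => Fin.ext ?_
  have := i.2
  simp only [Equiv.Perm.mul_apply, wPerm_val]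
  split_ifs <;> omega

lemma intervalFinset_subset_iff (hI : I ∈ cactusSet n) (hJ : J ∈ cactusSet n) :
    intervalFinset n J.1 J.2 ⊆ intervalFinset n I.1 I.2 ↔ I.1 ≤ J.1 ∧ J.2 ≤ I.2 := by
  obtain ⟨_, _, _⟩ := hI
  obtain ⟨_, _, _⟩ := hJ
  refine ⟨fun h => ?_, fun h i => by simp only [mem_intervalFinset]; omega⟩
  have h₁ := mem_intervalFinset.mp <|
    h (mem_intervalFinset.mpr (by simp only; omega) : (⟨J.1 - 1, by omega⟩ : Fin n) ∈ _)
  have h₂ := mem_intervalFinset.mp <|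
    h (mem_intervalFinset.mpr (by simp only; omega) : (⟨J.2 - 1, by omega⟩ : Fin n) ∈ _)
  simp only at h₁ h₂
  omega

lemma disjoint_intervalFinset_iff (hI : I ∈ cactusSet n) (hJ : J ∈ cactusSet n) :
    Disjoint (intervalFinset n I.1 I.2) (intervalFinset n J.1 J.2) ↔ I.2 < J.1 ∨ J.2 < I.1 := by
  obtain ⟨_, _, _⟩ := hI
  obtain ⟨_, _, _⟩ := hJ
  rw [Finset.disjoint_left]
  refine ⟨fun h => ?_, fun h i => by simp only [mem_intervalFinset]; omega⟩
  by_contra!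
  let i : Fin n := ⟨max I.1 J.1 - 1, by omega⟩
  exact h (mem_intervalFinset.mpr (by simp only [i]; omega) : i ∈ _)
    (mem_intervalFinset.mpr (by simp only [i]; omega))

end Intervals

section Gauss

variable {n : ℕ}

def gaussAdj (n : ℕ) (A B : GaussGen n) : Prop := Disjoint A.1 B.1 ∨ A.1 ⊆ B.1 ∨ B.1 ⊆ A.1

instance : Std.Symm (gaussAdj n) where
  symm _ _ := by
    rintro (h | h | h)
    exacts [.inl h.symm, .inr (.inr h), .inr (.inl h)]

lemma gaussAdj.permGen (σ : Equiv.Perm (Fin n)) {A B : GaussGen n} (h : gaussAdj n A B) :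
    gaussAdj n (permGen n σ A) (permGen n σ B) := by
  simp only [gaussAdj, _root_.permGen, Finset.disjoint_image σ.injective,
    Finset.image_subset_image_iff σ.injective]
  exact h

lemma gaussRels_cases : ∀ r ∈ gaussRels n, (∃ a, r = .of a * .of a) ∨
    ∃ a b, gaussAdj n a b ∧ r = .of a * .of b * (.of a)⁻¹ * (.of b)⁻¹ := by
  rintro r (h | ⟨a, b, hab, rfl⟩)
  · exact .inl h
  · exact .inr ⟨a, b, hab.imp_right .inl, rfl⟩

lemma GaussGroup.of_mul_self (A : GaussGen n) :
    (PresentedGroup.of A : GaussGroup n) * .of A = 1 :=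
  PresentedGroup.of_mul_self_of_mem (.inl ⟨A, rfl⟩)

lemma GaussGroup.of_commute {A B : GaussGen n} (h : gaussAdj n A B) :
    (PresentedGroup.of A : GaussGroup n) * .of B = .of B * .of A := by
  rcases h with h | h | h
  · exact PresentedGroup.of_mul_of_eq_of_mem (.inr ⟨A, B, .inl h, rfl⟩)
  · exact PresentedGroup.of_mul_of_eq_of_mem (.inr ⟨A, B, .inr h, rfl⟩)
  · exact (PresentedGroup.of_mul_of_eq_of_mem (.inr ⟨B, A, .inr h, rfl⟩)).symm

lemma permGen_permGen (σ τ : Equiv.Perm (Fin n)) (A : GaussGen n) :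
    permGen n σ (permGen n τ A) = permGen n (σ * τ) A :=
  Subtype.ext (by simp [permGen, Finset.image_image])

lemma permGen_one (A : GaussGen n) : permGen n 1 A = A :=
  Subtype.ext (by simp [permGen])

lemma permAut_of (σ : Equiv.Perm (Fin n)) (A : GaussGen n) :
    permAut n σ (.of A) = .of (permGen n σ A) :=
  permHom_of n σ A

end Gauss

section Cactus

variable {n : ℕ} {a b c d : cactusSet n}

def intervalGen (a : cactusSet n) : GaussGen n :=
  ⟨intervalFinset n a.1.1 a.1.2, two_le_intervalFinset_card a.2⟩

def intervalPerm (a : cactusSet n) : Equiv.Perm (Fin n) := wPerm n a.1.1 a.1.2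

def reflect (a b : cactusSet n) (h₁ : a.1.1 ≤ b.1.1) (h₂ : b.1.2 ≤ a.1.2) : cactusSet n :=
  ⟨(a.1.1 + a.1.2 - b.1.2, a.1.1 + a.1.2 - b.1.1), by
    obtain ⟨_, _, _⟩ := a.2
    obtain ⟨_, _, _⟩ := b.2
    exact ⟨by omega, by omega, by omega⟩⟩

lemma reflect_reflect (h₁ : a.1.1 ≤ b.1.1) (h₂ : b.1.2 ≤ a.1.2) (h₁' h₂') :
    reflect a (reflect a b h₁ h₂) h₁' h₂' = b := by
  obtain ⟨_, _, _⟩ := b.2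
  exact Subtype.ext (Prod.ext (by simp only [reflect]; omega) (by simp only [reflect]; omega))

lemma CactusGroup.of_mul_self (a : cactusSet n) :
    (PresentedGroup.of a : CactusGroup n) * .of a = 1 :=
  PresentedGroup.of_mul_self_of_mem (.inl ⟨a, rfl⟩)

lemma CactusGroup.of_commute (h : a.1.2 < b.1.1 ∨ b.1.2 < a.1.1) :
    (PresentedGroup.of a : CactusGroup n) * .of b = .of b * .of a :=
  PresentedGroup.of_mul_of_eq_of_mem (.inr (.inl ⟨a, b, h, rfl⟩))

lemma CactusGroup.of_mul_of_eq_reflect (h₁ : a.1.1 ≤ b.1.1) (h₂ : b.1.2 ≤ a.1.2) :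
    (PresentedGroup.of a : CactusGroup n) * .of b = .of (reflect a b h₁ h₂) * .of a :=
  PresentedGroup.of_mul_of_eq_of_mem (.inr (.inr ⟨a, b, _, h₁, h₂, rfl, rfl, rfl⟩))

lemma permGen_intervalPerm_self (a : cactusSet n) :
    permGen n (intervalPerm a) (intervalGen a) = intervalGen a :=
  Subtype.ext (image_wPerm_intervalFinset_of_ge a.2 le_rfl le_rfl)

lemma permGen_intervalPerm_involutive (a : cactusSet n) :
    Function.Involutive (permGen n (intervalPerm a)) := fun A => by
  rw [permGen_permGen, intervalPerm, wPerm_mul_self, permGen_one]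

lemma intervalGen_injective : Function.Injective (intervalGen (n := n)) := by
  intro a b h
  have hab := (intervalFinset_subset_iff b.2 a.2).mp (congrArg Subtype.val h).le
  have hba := (intervalFinset_subset_iff a.2 b.2).mp (congrArg Subtype.val h).ge
  exact Subtype.ext (Prod.ext (by omega) (by omega))

/-- `gaussWord [c, d]` is `gaussWord [a, b]` with its two letters swapped, and
`w_c w_d = w_a w_b`. -/
def IsGaussSwap (a b c d : cactusSet n) : Prop :=
  intervalGen c = permGen n (intervalPerm a) (intervalGen b) ∧
    permGen n (intervalPerm c) (intervalGen d) = intervalGen a ∧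
    intervalPerm c * intervalPerm d = intervalPerm a * intervalPerm b

lemma IsGaussSwap.symm (h : IsGaussSwap a b c d) : IsGaussSwap c d a b :=
  ⟨h.2.1.symm, h.1.symm, h.2.2.symm⟩

lemma eq_of_intervalGen_eq_permGen
    (h : intervalGen a = permGen n (intervalPerm a) (intervalGen b)) : b = a := by
  refine intervalGen_injective ((permGen_intervalPerm_involutive a).injective ?_)
  rw [permGen_intervalPerm_self, h]

lemma isGaussSwap_of_disjoint (h : a.1.2 < b.1.1 ∨ b.1.2 < a.1.1) : IsGaussSwap a b b a :=
  ⟨(Subtype.ext (image_wPerm_intervalFinset_of_disjoint a.2 h)).symm,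
    Subtype.ext (image_wPerm_intervalFinset_of_disjoint b.2 (by omega)),
    wPerm_commute_of_disjoint b.2 a.2 (by omega)⟩

lemma isGaussSwap_reflect (h₁ : a.1.1 ≤ b.1.1) (h₂ : b.1.2 ≤ a.1.2) :
    IsGaussSwap a b (reflect a b h₁ h₂) a :=
  ⟨(Subtype.ext (image_wPerm_intervalFinset_of_le a.2 h₁ h₂)).symm,
    Subtype.ext (image_wPerm_intervalFinset_of_ge (reflect a b h₁ h₂).2
      (by simp only [reflect]; omega) (by simp only [reflect]; omega)),
    (wPerm_mul_wPerm_of_le a.2 h₁ h₂).symm⟩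

lemma exists_isGaussSwap
    (h : gaussAdj n (intervalGen a) (permGen n (intervalPerm a) (intervalGen b))) :
    ∃ c d, (PresentedGroup.of a : CactusGroup n) * .of b = .of c * .of d ∧
      IsGaussSwap a b c d := by
  have h' := h.permGen (intervalPerm a)
  rw [permGen_intervalPerm_self, permGen_permGen, intervalPerm, wPerm_mul_self,
    permGen_one] at h'
  obtain ⟨_, _, _⟩ := a.2
  obtain ⟨_, _, _⟩ := b.2
  rcases h' with h' | h' | h'
  · have hd := (disjoint_intervalFinset_iff a.2 b.2).mp h'
    exact ⟨b, a, CactusGroup.of_commute hd, isGaussSwap_of_disjoint hd⟩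
  · obtain ⟨h₁, h₂⟩ := (intervalFinset_subset_iff b.2 a.2).mp h'
    have h₁' : b.1.1 ≤ (reflect b a h₁ h₂).1.1 := by simp only [reflect]; omega
    have h₂' : (reflect b a h₁ h₂).1.2 ≤ b.1.2 := by simp only [reflect]; omega
    have hrel := CactusGroup.of_mul_of_eq_reflect h₁' h₂'
    have hswap := isGaussSwap_reflect h₁' h₂'
    rw [reflect_reflect] at hrel hswap
    exact ⟨b, reflect b a h₁ h₂, hrel.symm, hswap.symm⟩
  · obtain ⟨h₁, h₂⟩ := (intervalFinset_subset_iff a.2 b.2).mp h'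
    exact ⟨reflect a b h₁ h₂, a, CactusGroup.of_mul_of_eq_reflect h₁ h₂,
      isGaussSwap_reflect h₁ h₂⟩

end Cactus

section Representation

open RightAngled

variable {n : ℕ} {a b c d : cactusSet n}

def cactusImage (a : cactusSet n) : GaussGroup n ⋊[permAut n] Equiv.Perm (Fin n) :=
  ⟨.of (intervalGen a), intervalPerm a⟩

lemma cactusImage_mul (a b : cactusSet n) :
    cactusImage a * cactusImage b =
      ⟨.of (intervalGen a) * .of (permGen n (intervalPerm a) (intervalGen b)),
        intervalPerm a * intervalPerm b⟩ := by
  rw [cactusImage, cactusImage, SemidirectProduct.mul_def, permAut_of]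

lemma IsGaussSwap.cactusImage_mul_eq (h : IsGaussSwap a b c d)
    (hadj : gaussAdj n (intervalGen a) (intervalGen c)) :
    cactusImage a * cactusImage b = cactusImage c * cactusImage d := by
  obtain ⟨h₁, h₂, h₃⟩ := h
  rw [cactusImage_mul, cactusImage_mul, h₂, h₃, ← h₁, GaussGroup.of_commute hadj]

lemma cactusImage_mul_self (a : cactusSet n) : cactusImage a * cactusImage a = 1 := by
  rw [cactusImage_mul, permGen_intervalPerm_self, GaussGroup.of_mul_self, intervalPerm,
    wPerm_mul_self]
  rfl

def cactusRep (n : ℕ) : CactusGroup n →* GaussGroup n ⋊[permAut n] Equiv.Perm (Fin n) :=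
  PresentedGroup.toGroup (f := cactusImage) <| by
    rintro r (⟨a, rfl⟩ | ⟨a, b, h, rfl⟩ | ⟨a, b, c, h₁, h₂, hc₁, hc₂, rfl⟩)
    · simpa using cactusImage_mul_self a
    · have hadj : gaussAdj n (intervalGen a) (intervalGen b) :=
        .inl ((disjoint_intervalFinset_iff a.2 b.2).mpr h)
      simp [(isGaussSwap_of_disjoint h).cactusImage_mul_eq hadj]
    · obtain rfl : c = reflect a b h₁ h₂ := Subtype.ext (Prod.ext hc₁ hc₂)
      have hadj : gaussAdj n (intervalGen a) (intervalGen (reflect a b h₁ h₂)) := by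
        refine .inr (.inr ((intervalFinset_subset_iff a.2 (reflect a b h₁ h₂).2).mpr ?_))
        obtain ⟨_, _, _⟩ := b.2
        simp only [reflect]
        omega
      simp [(isGaussSwap_reflect h₁ h₂).cactusImage_mul_eq hadj]

lemma cactusRep_of (a : cactusSet n) : cactusRep n (.of a) = cactusImage a :=
  PresentedGroup.toGroup.of _

def gaussWord : List (cactusSet n) → List (GaussGen n)
  | [] => []
  | a :: t => intervalGen a :: (gaussWord t).map (permGen n (intervalPerm a))

lemma map_permGen_map_permGen (σ τ : Equiv.Perm (Fin n)) (L : List (GaussGen n)) :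
    (L.map (permGen n τ)).map (permGen n σ) = L.map (permGen n (σ * τ)) := by
  simp [Function.comp_def, permGen_permGen]

lemma map_permGen_intervalPerm_involutive (a : cactusSet n) :
    Function.Involutive (List.map (permGen n (intervalPerm a))) := fun L => by
  rw [List.map_map, (permGen_intervalPerm_involutive a).comp_self, List.map_id]

lemma cactusRep_list_prod (c : List (cactusSet n)) :
    cactusRep n (c.map PresentedGroup.of).prod =
      ⟨((gaussWord c).map PresentedGroup.of).prod, (c.map intervalPerm).prod⟩ := by
  induction c with
  | nil => rfl
  | cons a t ih =>
    rw [List.map_cons, List.prod_cons, map_mul, ih, cactusRep_of, cactusImage,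
      SemidirectProduct.mul_def]
    simp [gaussWord, map_list_prod, permAut_of, Function.comp_def]

lemma exists_gaussWord_eq_of_move {c : List (cactusSet n)} {g : List (GaussGen n)}
    (h : Move (gaussAdj n) (gaussWord c) g) :
    ∃ c', ((c'.map PresentedGroup.of).prod : CactusGroup n) = (c.map PresentedGroup.of).prod ∧
      gaussWord c' = g := by
  induction c generalizing g with
  | nil =>
    rcases h with ⟨u, v, _, _, _, h, _⟩ | ⟨u, v, _, h, _⟩ <;> simp [gaussWord] at h
  | cons a t ih =>
    set σ := permGen n (intervalPerm a)
    rcases Move.cons_cases h with ⟨L, hL, rfl⟩ | ⟨y, v, hyv, ⟨hadj, rfl⟩ | ⟨hy, rfl⟩⟩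
    · have hL' := hL.map σ fun _ _ => gaussAdj.permGen _
      rw [map_permGen_intervalPerm_involutive] at hL'
      obtain ⟨t', ht', hw⟩ := ih hL'
      refine ⟨a :: t', by simp [ht'], ?_⟩
      rw [gaussWord, hw, map_permGen_intervalPerm_involutive]
    all_goals
      obtain _ | ⟨b, t⟩ := t
      · simp [gaussWord] at hyv
      simp only [gaussWord, List.map_cons, List.cons.injEq] at hyv
      obtain ⟨rfl, rfl⟩ := hyv
    · obtain ⟨c, d, hrel, hc, hd, hcd⟩ := exists_isGaussSwap hadj
      refine ⟨c :: d :: t, ?_, ?_⟩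
      · simp only [List.map_cons, List.prod_cons, ← mul_assoc, hrel]
      · simp only [gaussWord, List.map_cons, map_permGen_map_permGen, hcd, hc, hd]
    · obtain rfl := eq_of_intervalGen_eq_permGen hy
      refine ⟨t, ?_, (map_permGen_intervalPerm_involutive _ _).symm⟩
      simp [← mul_assoc, CactusGroup.of_mul_self]

lemma gaussWord_eq_nil {c : List (cactusSet n)} : gaussWord c = [] ↔ c = [] := by
  cases c <;> simp [gaussWord]

lemma exists_gaussWord_eq_of_moves {c : List (cactusSet n)} {g : List (GaussGen n)}
    (h : Relation.ReflTransGen (Move (gaussAdj n)) (gaussWord c) g) :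
    ∃ c', ((c'.map PresentedGroup.of).prod : CactusGroup n) = (c.map PresentedGroup.of).prod ∧
      gaussWord c' = g := by
  induction h with
  | refl => exact ⟨c, rfl, rfl⟩
  | tail _ hmove ih =>
    obtain ⟨c₁, hc₁, rfl⟩ := ih
    obtain ⟨c₂, hc₂, rfl⟩ := exists_gaussWord_eq_of_move hmove
    exact ⟨c₂, hc₂.trans hc₁, rfl⟩

end Representation

theorem cactus_embeds_in_virtual_general (n : ℕ) :
    ∃ ρ : CactusGroup n →* SemidirectProduct (GaussGroup n) (Equiv.Perm (Fin n)) (permAut n),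
      (∀ (p q : ℕ) (h : (p, q) ∈ cactusSet n),
        ρ (PresentedGroup.of ⟨(p, q), h⟩) =
          ⟨PresentedGroup.of ⟨intervalFinset n p q, two_le_intervalFinset_card h⟩,
            wPerm n p q⟩) ∧
      Function.Injective ρ := by
  refine ⟨cactusRep n, fun p q h => cactusRep_of _, (injective_iff_map_eq_one _).mpr ?_⟩
  intro x hx
  obtain ⟨c, rfl⟩ := exists_list_map_prod_eq _ CactusGroup.of_mul_self
    (PresentedGroup.closure_range_of _) x
  rw [cactusRep_list_prod] at hx
  have hmoves := RightAngled.moves_nil_of_prod_eq_one gaussRels_cases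
    (congrArg SemidirectProduct.left hx)
  obtain ⟨c', hc', hnil⟩ := exists_gaussWord_eq_of_moves hmoves
  obtain rfl := gaussWord_eq_nil.mp hnil
  exact hc'.symm

/-- For every `n ≥ 2` there is a well-defined group homomorphism
`ρ : J_n → D_n ⋊ S_n` with `ρ(s_{p,q}) = (τ_{[p,q]}, w_{p,q})`, and it is injective. -/
theorem cactus_embeds_in_virtual (n : ℕ) (hn : 2 ≤ n) :
    ∃ ρ : CactusGroup n →* SemidirectProduct (GaussGroup n) (Equiv.Perm (Fin n)) (permAut n),
      (∀ (p q : ℕ) (h : (p, q) ∈ cactusSet n),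
        ρ (PresentedGroup.of ⟨(p, q), h⟩) =
          ⟨PresentedGroup.of ⟨intervalFinset n p q, two_le_intervalFinset_card h⟩,
            wPerm n p q⟩) ∧
      Function.Injective ρ :=
  cactus_embeds_in_virtual_general n
end

section
/- For all integers n ≥ 2 and k ≥ 0, the group homomorphism J_n → J_{n+k} defined on generators by s_{p,q} ↦ s_{p,q} is injective. -/
lemma cactusSet_mono {n m : ℕ} (h : n ≤ m) : cactusSet n ⊆ cactusSet m :=
  fun _ hpq => ⟨hpq.1, hpq.2.1, hpq.2.2.trans h⟩

namespace PartialCactusGroup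

open PresentedGroup

variable {C D : Set (ℕ × ℕ)} {G : Type*} [Group G]

structure IsCactusFamily (f : C → G) : Prop where
  mul_self : ∀ a, f a * f a = 1
  comm : ∀ a b : C, a.1.2 < b.1.1 ∨ b.1.2 < a.1.1 → f a * f b = f b * f a
  nest : ∀ a b c : C, a.1.1 ≤ b.1.1 → b.1.2 ≤ a.1.2 → c.1.1 = a.1.1 + a.1.2 - b.1.2 →
    c.1.2 = a.1.1 + a.1.2 - b.1.1 → f a * f b = f c * f a

theorem isCactusFamily_iff {f : C → G} :
    IsCactusFamily f ↔ ∀ r ∈ cactusRels C, FreeGroup.lift f r = 1 := by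
  constructor
  · rintro hf r (⟨a, rfl⟩ | ⟨a, b, h, rfl⟩ | ⟨a, b, c, hpm, hrq, hc₁, hc₂, rfl⟩)
      <;> simp only [map_mul, map_inv, FreeGroup.lift_apply_of, mul_inv_eq_iff_eq_mul, one_mul]
    exacts [hf.mul_self a, hf.comm a b h, hf.nest a b c hpm hrq hc₁ hc₂]
  · intro h
    refine ⟨fun a => ?_, fun a b hab => ?_, fun a b c hpm hrq hc₁ hc₂ => ?_⟩
    · simpa only [map_mul, FreeGroup.lift_apply_of] using h _ (Or.inl ⟨a, rfl⟩)
    · simpa only [map_mul, map_inv, FreeGroup.lift_apply_of, mul_inv_eq_iff_eq_mul, one_mul]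
        using h _ (Or.inr (Or.inl ⟨a, b, hab, rfl⟩))
    · simpa only [map_mul, map_inv, FreeGroup.lift_apply_of, mul_inv_eq_iff_eq_mul, one_mul]
        using h _ (Or.inr (Or.inr ⟨a, b, c, hpm, hrq, hc₁, hc₂, rfl⟩))

theorem isCactusFamily_of : IsCactusFamily (of : C → PartialCactusGroup C) := by
  have : FreeGroup.lift (of : C → PartialCactusGroup C) = mk (cactusRels C) :=
    FreeGroup.ext_hom _ _ fun _ => FreeGroup.lift_apply_of
  exact isCactusFamily_iff.mpr fun r hr => this ▸ one_of_mem hr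

def lift (f : C → G) (hf : IsCactusFamily f) : PartialCactusGroup C →* G :=
  toGroup (isCactusFamily_iff.mp hf)

@[simp]
theorem lift_of {f : C → G} (hf : IsCactusFamily f) (a : C) : lift f hf (of a) = f a :=
  toGroup.of _

theorem of_inv (a : C) : (of a : PartialCactusGroup C)⁻¹ = of a :=
  inv_eq_of_mul_eq_one_right (isCactusFamily_of.mul_self a)

theorem IsCactusFamily.comp_inclusion {f : D → G} (hf : IsCactusFamily f) (h : C ⊆ D) :
    IsCactusFamily (f ∘ Set.inclusion h) :=
  ⟨fun a => hf.mul_self (Set.inclusion h a),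
    fun a b => hf.comm (Set.inclusion h a) (Set.inclusion h b),
    fun a b c => hf.nest (Set.inclusion h a) (Set.inclusion h b) (Set.inclusion h c)⟩

def map (h : C ⊆ D) : PartialCactusGroup C →* PartialCactusGroup D :=
  lift _ (isCactusFamily_of.comp_inclusion h)

@[simp]
theorem map_of (h : C ⊆ D) (a : C) : map h (of a) = of (Set.inclusion h a) :=
  lift_of _ a

end PartialCactusGroup

namespace CactusGroup

open Finset

def reflect (p q x : ℕ) : ℕ := if p ≤ x ∧ x ≤ q then p + q - x else x

theorem reflect_involutive (p q : ℕ) : Function.Involutive (reflect p q) := by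
  intro x; unfold reflect; split_ifs <;> omega

theorem reflect_comm {p q m r : ℕ} (h : q < m ∨ r < p) (x : ℕ) :
    reflect p q (reflect m r x) = reflect m r (reflect p q x) := by
  unfold reflect; split_ifs <;> omega

theorem reflect_reflect_of_le {p q m r : ℕ} (hpm : p ≤ m) (hmr : m ≤ r) (hrq : r ≤ q)
    (x : ℕ) : reflect p q (reflect m r x) = reflect (p + q - r) (p + q - m) (reflect p q x) := by
  unfold reflect; split_ifs <;> omega

theorem image_reflect_image_reflect (p q : ℕ) (R : Finset ℕ) :
    (R.image (reflect p q)).image (reflect p q) = R := by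
  rw [image_image, (reflect_involutive p q).comp_self, image_id]

theorem image_reflect_Icc {p q n : ℕ} (hp : 1 ≤ p) (hq : q ≤ n) :
    (Icc 1 n).image (reflect p q) = Icc 1 n := by
  refine eq_of_subset_of_card_le (fun x hx => ?_)
    (card_image_of_injective _ (reflect_involutive p q).injective).ge
  obtain ⟨y, hy, rfl⟩ := mem_image.mp hx
  rw [mem_Icc] at hy ⊢
  unfold reflect; split_ifs <;> omega

def countBelow (R : Finset ℕ) (t : ℕ) : ℕ := #{x ∈ R | x < t}

theorem countBelow_mono (R : Finset ℕ) : Monotone (countBelow R) :=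
  fun _ _ h => card_le_card (monotone_filter_right R fun _ _ hx => hx.trans_le h)

theorem countBelow_le_card (R : Finset ℕ) (t : ℕ) : countBelow R t ≤ #R :=
  card_filter_le _ _

theorem countBelow_Icc {n t : ℕ} (ht : t ≤ n + 1) : countBelow (Icc 1 n) t = t - 1 := by
  have : {x ∈ Icc 1 n | x < t} = Ico 1 t := by
    ext x; simp only [mem_filter, mem_Icc, mem_Ico]; omega
  rw [countBelow, this, Nat.card_Ico]

theorem countBelow_image_reflect (p q t : ℕ) (R : Finset ℕ) :
    countBelow (R.image (reflect p q)) t = #{x ∈ R | reflect p q x < t} := by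
  rw [countBelow, filter_image, card_image_of_injective _ (reflect_involutive p q).injective]

theorem countBelow_image_reflect_of_le_or_lt {p q t : ℕ} (h : t ≤ p ∨ q < t)
    (R : Finset ℕ) :
    countBelow (R.image (reflect p q)) t = countBelow R t := by
  rw [countBelow_image_reflect, countBelow]
  congr 1
  refine filter_congr fun x _ => ?_
  unfold reflect; split_ifs <;> omega

theorem countBelow_image_reflect_add {p q s : ℕ} (hps : p ≤ s) (hsq : s ≤ q + 1)
    (R : Finset ℕ) :
    countBelow (R.image (reflect p q)) (p + q + 1 - s) + countBelow R s =
      countBelow R p + countBelow R (q + 1) := by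
  have hunion : {x ∈ R | reflect p q x < p + q + 1 - s} ∪ {x ∈ R | x < s} =
      {x ∈ R | x < q + 1} := by
    rw [← filter_or]
    refine filter_congr fun x _ => ?_
    unfold reflect; split_ifs <;> omega
  have hinter : {x ∈ R | reflect p q x < p + q + 1 - s} ∩ {x ∈ R | x < s} =
      {x ∈ R | x < p} := by
    rw [← filter_and]
    refine filter_congr fun x _ => ?_
    unfold reflect; split_ifs <;> omega
  rw [countBelow_image_reflect, countBelow, countBelow, countBelow, ← card_union_add_card_inter,
    hunion, hinter, add_comm]

open PresentedGroup PartialCactusGroup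

/-- `s_{a,b}` in `J_n`, and `1` when `[a, b]` is not a generating interval of `J_n`. -/
def gen (n a b : ℕ) : CactusGroup n :=
  if h : 1 ≤ a ∧ a < b ∧ b ≤ n then of ⟨(a, b), h⟩ else 1

theorem gen_mul_self (n a b : ℕ) : gen n a b * gen n a b = 1 := by
  unfold gen; split_ifs
  exacts [isCactusFamily_of.mul_self _, mul_one 1]

theorem gen_comm {n a b a' b' : ℕ} (h : b < a' ∨ b' < a) :
    gen n a b * gen n a' b' = gen n a' b' * gen n a b := by
  unfold gen
  split_ifs <;> first | exact isCactusFamily_of.comm _ _ h | simp only [mul_one, one_mul]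

theorem gen_mul_gen_of_le {n a b a' b' : ℕ} (ha : 1 ≤ a) (haa' : a ≤ a') (hbb' : b' ≤ b)
    (hbn : b ≤ n) : gen n a b * gen n a' b' = gen n (a + b - b') (a + b - a') * gen n a b := by
  unfold gen
  split_ifs <;> first
    | exact isCactusFamily_of.nest _ _ _ haa' hbb' rfl rfl | omega | simp only [mul_one, one_mul]

/-- The strands at positions `R` that `s_{p,q}` reverses are those numbered
`countBelow R p + 1, …, countBelow R (q + 1)` among `R`. -/
def restrictGen (n p q : ℕ) (R : Finset ℕ) : CactusGroup n :=
  gen n (countBelow R p + 1) (countBelow R (q + 1))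

theorem restrictGen_image_reflect {n p q m r : ℕ} (hm : m ≤ p ∨ q < m)
    (hr : r < p ∨ q ≤ r) (R : Finset ℕ) :
    restrictGen n m r (R.image (reflect p q)) = restrictGen n m r R := by
  rw [restrictGen, countBelow_image_reflect_of_le_or_lt hm,
    countBelow_image_reflect_of_le_or_lt (by omega), restrictGen]

theorem restrictGen_comm {n p q m r : ℕ} (h : q < m ∨ r < p) (R : Finset ℕ) :
    restrictGen n p q R * restrictGen n m r R = restrictGen n m r R * restrictGen n p q R := by
  refine gen_comm (h.imp (fun h => ?_) (fun h => ?_)) <;>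
    exact Nat.lt_succ_of_le (countBelow_mono R h)

theorem restrictGen_mul_restrictGen_of_le {n p q m r : ℕ} (hpm : p ≤ m) (hmr : m ≤ r)
    (hrq : r ≤ q) {R : Finset ℕ} (hR : #R ≤ n) :
    restrictGen n p q R * restrictGen n m r R =
      restrictGen n (p + q - r) (p + q - m) (R.image (reflect p q)) * restrictGen n p q R := by
  have hr := countBelow_image_reflect_add (p := p) (q := q) (s := r + 1) (by omega) (by omega) R
  have hm := countBelow_image_reflect_add (p := p) (q := q) (s := m) hpm (by omega) R
  rw [show p + q + 1 - (r + 1) = p + q - r by omega] at hr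
  rw [show p + q + 1 - m = p + q - m + 1 by omega] at hm
  have hpm' := countBelow_mono R hpm
  have hrq' := countBelow_mono R (by omega : r + 1 ≤ q + 1)
  have hqn := (countBelow_le_card R (q + 1)).trans hR
  rw [restrictGen, restrictGen, gen_mul_gen_of_le le_add_self (by omega) hrq' hqn, restrictGen]
  congr 2 <;> omega

theorem restrictGen_Icc {n p q : ℕ} (h : (p, q) ∈ cactusSet n) :
    restrictGen n p q (Icc 1 n) = of ⟨(p, q), h⟩ := by
  obtain ⟨hp, hpq, hqn⟩ := h
  rw [restrictGen, countBelow_Icc (by omega), countBelow_Icc (by omega), gen,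
    dif_pos (by omega)]
  congr
  omega

abbrev State (n : ℕ) := {R : Finset ℕ // #R ≤ n} × CactusGroup n

def State.move {n : ℕ} (p q : ℕ) (x : State n) : State n :=
  (⟨x.1.1.image (reflect p q), card_image_le.trans x.1.2⟩, restrictGen n p q x.1.1 * x.2)

theorem State.move_involutive (n p q : ℕ) : Function.Involutive (State.move (n := n) p q) := by
  intro x
  refine Prod.ext (Subtype.ext (image_reflect_image_reflect p q x.1.1)) ?_
  change restrictGen n p q (x.1.1.image (reflect p q)) * (restrictGen n p q x.1.1 * x.2) = x.2
  rw [restrictGen_image_reflect (Or.inl le_rfl) (Or.inr le_rfl), ← mul_assoc, restrictGen,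
    gen_mul_self, one_mul]

theorem State.move_comm {n p q m r : ℕ} (hpq : p ≤ q) (hmr : m ≤ r) (h : q < m ∨ r < p)
    (x : State n) : State.move p q (State.move m r x) = State.move m r (State.move p q x) := by
  refine Prod.ext (Subtype.ext ?_) ?_
  · simp only [State.move, image_image]
    exact image_congr fun y _ => reflect_comm h y
  · change restrictGen n p q (x.1.1.image (reflect m r)) * (restrictGen n m r x.1.1 * x.2) =
      restrictGen n m r (x.1.1.image (reflect p q)) * (restrictGen n p q x.1.1 * x.2)
    rw [restrictGen_image_reflect (by omega) (by omega),
      restrictGen_image_reflect (by omega) (by omega), ← mul_assoc, ← mul_assoc,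
      restrictGen_comm h]

theorem State.move_move_of_le {n p q m r : ℕ} (hpm : p ≤ m) (hmr : m ≤ r) (hrq : r ≤ q)
    (x : State n) :
    State.move p q (State.move m r x) = State.move (p + q - r) (p + q - m) (State.move p q x) := by
  refine Prod.ext (Subtype.ext ?_) ?_
  · simp only [State.move, image_image]
    exact image_congr fun y _ => reflect_reflect_of_le hpm hmr hrq y
  · change restrictGen n p q (x.1.1.image (reflect m r)) * (restrictGen n m r x.1.1 * x.2) =
      restrictGen n (p + q - r) (p + q - m) (x.1.1.image (reflect p q)) *
        (restrictGen n p q x.1.1 * x.2)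
    rw [restrictGen_image_reflect (.inl hpm) (.inr hrq), ← mul_assoc, ← mul_assoc,
      restrictGen_mul_restrictGen_of_le hpm hmr hrq x.1.2]

def action (n m : ℕ) : CactusGroup m →* Equiv.Perm (State n) :=
  lift (fun a => (State.move_involutive n a.1.1 a.1.2).toPerm _)
    ⟨fun a => Equiv.ext (State.move_involutive n a.1.1 a.1.2),
      fun a b h => Equiv.ext (State.move_comm a.2.2.1.le b.2.2.1.le h),
      fun a b c hpm hrq hc₁ hc₂ => Equiv.ext fun x => by
        simp only [Equiv.Perm.mul_apply, Function.Involutive.coe_toPerm, hc₁, hc₂]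
        exact State.move_move_of_le hpm b.2.2.1.le hrq x⟩

@[simp]
theorem action_of_apply {n m : ℕ} (a : cactusSet m) (x : State n) :
    action n m (of a) x = State.move a.1.1 a.1.2 x := by
  simp only [action, lift_of, Function.Involutive.coe_toPerm]

def allStrands (n : ℕ) : {R : Finset ℕ // #R ≤ n} := ⟨Icc 1 n, (Nat.card_Icc 1 n).le⟩

theorem State.move_allStrands {n p q : ℕ} (h : (p, q) ∈ cactusSet n) (g : CactusGroup n) :
    State.move p q (allStrands n, g) = (allStrands n, of ⟨(p, q), h⟩ * g) :=
  Prod.ext (Subtype.ext (image_reflect_Icc h.1 h.2.2)) (congrArg (· * g) (restrictGen_Icc h))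

theorem action_map_apply_allStrands {n m : ℕ} (h : cactusSet n ⊆ cactusSet m)
    (x g : CactusGroup n) : action n m (map h x) (allStrands n, g) = (allStrands n, x * g) := by
  induction (closure_range_of _ ▸ Subgroup.mem_top x : x ∈ Subgroup.closure (Set.range of))
    using Subgroup.closure_induction_left generalizing g with
  | one => simp only [map_one, Equiv.Perm.coe_one, id_eq, one_mul]
  | mul_left _ ha y _ ih =>
    obtain ⟨⟨⟨p, q⟩, hpq⟩, rfl⟩ := ha
    simp only [map_mul, map_of, Set.inclusion_mk, Equiv.Perm.coe_mul, Function.comp_apply, ih,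
      action_of_apply, State.move_allStrands hpq, mul_assoc]
  | inv_mul_cancel _ ha y _ ih =>
    obtain ⟨⟨⟨p, q⟩, hpq⟩, rfl⟩ := ha
    simp only [of_inv, map_mul, map_of, Set.inclusion_mk, Equiv.Perm.coe_mul, Function.comp_apply,
      ih, action_of_apply, State.move_allStrands hpq, mul_assoc]

theorem map_injective {n m : ℕ} (h : cactusSet n ⊆ cactusSet m) : Function.Injective (map h) :=
  Function.LeftInverse.injective (g := fun y => (action n m y (allStrands n, 1)).2) fun x => by
    simp only [action_map_apply_allStrands, mul_one]

end CactusGroup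

theorem cactus_embeds_in_bigger_cactus_general (n k : ℕ) :
    ∃ φ : CactusGroup n →* CactusGroup (n + k),
      (∀ (pq : ℕ × ℕ) (h : pq ∈ cactusSet n),
        φ (PresentedGroup.of ⟨pq, h⟩) =
          PresentedGroup.of ⟨pq, cactusSet_mono (Nat.le_add_right n k) h⟩) ∧
      Function.Injective φ :=
  ⟨PartialCactusGroup.map (cactusSet_mono (Nat.le_add_right n k)),
    fun _ _ => PartialCactusGroup.map_of _ _, CactusGroup.map_injective _⟩

/-- For all `n ≥ 2` and `k ≥ 0`, the homomorphism `J_n → J_{n+k}`,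
`s_{p,q} ↦ s_{p,q}`, is injective. -/
theorem cactus_embeds_in_bigger_cactus (n k : ℕ) (hn : 2 ≤ n) :
    ∃ φ : CactusGroup n →* CactusGroup (n + k),
      (∀ (pq : ℕ × ℕ) (h : pq ∈ cactusSet n),
        φ (PresentedGroup.of ⟨pq, h⟩) =
          PresentedGroup.of ⟨pq, cactusSet_mono (Nat.le_add_right n k) h⟩) ∧
      Function.Injective φ :=
  cactus_embeds_in_bigger_cactus_general n k
end

section
/- For every 2 ≤ i ≤ n: (a) the assignment s_{p,q} ↦ 1 if q−p+1 < i and s_{p,q} ↦ s_{p,q} if q−p+1 ≥ i extends to a surjective group homomorphism ε_i : J_n → J_n^{i,n}; (b) the homomorphism ι_i : J_n^{i,n} → J_n given by s_{p,q} ↦ s_{p,q} satisfies ε_i ∘ ι_i = id, so the sequence splits; (c) the kernel of ε_i equals the normal closure in J_n of the set of generators {s_{p,q} : q−p+1 < i}. Consequently J_n is a semidirect product of ker ε_i by J_n^{i,n}. -/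
/-- The generating intervals of `J_n^{i,j}`: those `[p,q]` whose leaf number `q-p+1`
lies between `i` and `j`. -/
def sliceSet (n i j : ℕ) : Set (ℕ × ℕ) :=
  {pq | pq ∈ cactusSet n ∧ i ≤ pq.2 - pq.1 + 1 ∧ pq.2 - pq.1 + 1 ≤ j}

/-- The group `J_n^{i,j}`, presented by the generators `s_{p,q}` with `i ≤ q-p+1 ≤ j` and those
cactus relations involving only such generators. -/
abbrev SliceCactusGroup (n i j : ℕ) := PartialCactusGroup (sliceSet n i j)

section CactusAux

open PresentedGroup

lemma cactus_rel_one {α : Type*} {rels : Set (FreeGroup α)} {w : FreeGroup α} (h : w ∈ rels) :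
    PresentedGroup.mk rels w = 1 :=
  (QuotientGroup.eq_one_iff _).2 (Subgroup.subset_normalClosure h)

lemma cactus_rel1 {α : Type*} {rels : Set (FreeGroup α)} {a : α}
    (h : FreeGroup.of a * FreeGroup.of a ∈ rels) :
    (PresentedGroup.of (rels := rels) a) * PresentedGroup.of a = 1 := by
  have := cactus_rel_one h
  rwa [map_mul] at this

lemma cactus_rel2 {α : Type*} {rels : Set (FreeGroup α)} {a b : α}
    (h : FreeGroup.of a * FreeGroup.of b * (FreeGroup.of a)⁻¹ * (FreeGroup.of b)⁻¹ ∈ rels) :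
    (PresentedGroup.of (rels := rels) a) * PresentedGroup.of b *
      (PresentedGroup.of a)⁻¹ * (PresentedGroup.of b)⁻¹ = 1 := by
  have := cactus_rel_one h
  rwa [map_mul, map_mul, map_mul, map_inv, map_inv] at this

lemma cactus_rel3 {α : Type*} {rels : Set (FreeGroup α)} {a b c : α}
    (h : FreeGroup.of a * FreeGroup.of b * (FreeGroup.of a)⁻¹ * (FreeGroup.of c)⁻¹ ∈ rels) :
    (PresentedGroup.of (rels := rels) a) * PresentedGroup.of b *
      (PresentedGroup.of a)⁻¹ * (PresentedGroup.of c)⁻¹ = 1 := by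
  have := cactus_rel_one h
  rwa [map_mul, map_mul, map_mul, map_inv, map_inv] at this

/-- The map on generators defining `ε_i`. -/
noncomputable def epsFun (n i : ℕ) (a : cactusSet n) : SliceCactusGroup n i n :=
  if _h : a.1.2 - a.1.1 + 1 < i then 1
  else PresentedGroup.of ⟨a.1, a.2, by omega, by
    obtain ⟨h1, h2, h3⟩ := a.2
    omega⟩

lemma epsFun_pos {n i : ℕ} (a : cactusSet n) (h : a.1.2 - a.1.1 + 1 < i) :
    epsFun n i a = 1 := dif_pos h

lemma epsFun_neg {n i : ℕ} (a : cactusSet n) (h : ¬ a.1.2 - a.1.1 + 1 < i)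
    (h' : a.1 ∈ sliceSet n i n) :
    epsFun n i a = PresentedGroup.of ⟨a.1, h'⟩ := dif_neg h

lemma epsFun_rels (n i : ℕ) :
    ∀ r ∈ cactusRels (cactusSet n), FreeGroup.lift (epsFun n i) r = 1 := by
  rintro r (⟨a, rfl⟩ | ⟨a, b, hdisj, rfl⟩ | ⟨a, b, c, hab1, hab2, hc1, hc2, rfl⟩) <;>
    simp only [map_mul, map_inv, FreeGroup.lift_apply_of]
  · -- (j1)
    by_cases h : a.1.2 - a.1.1 + 1 < i
    · rw [epsFun_pos a h]; group
    · have hmem : a.1 ∈ sliceSet n i n := ⟨a.2, by omega, by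
        obtain ⟨h1, h2, h3⟩ := a.2; omega⟩
      rw [epsFun_neg a h hmem]
      exact cactus_rel1 (Or.inl ⟨⟨a.1, hmem⟩, rfl⟩)
  · -- (j2)
    by_cases ha : a.1.2 - a.1.1 + 1 < i
    · rw [epsFun_pos a ha]; group
    by_cases hb : b.1.2 - b.1.1 + 1 < i
    · rw [epsFun_pos b hb]; group
    have hmema : a.1 ∈ sliceSet n i n := ⟨a.2, by omega, by
      obtain ⟨h1, h2, h3⟩ := a.2; omega⟩
    have hmemb : b.1 ∈ sliceSet n i n := ⟨b.2, by omega, by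
      obtain ⟨h1, h2, h3⟩ := b.2; omega⟩
    rw [epsFun_neg a ha hmema, epsFun_neg b hb hmemb]
    exact cactus_rel2 (Or.inr (Or.inl ⟨⟨a.1, hmema⟩, ⟨b.1, hmemb⟩, hdisj, rfl⟩))
  · -- (j3)
    obtain ⟨ha1, ha2, ha3⟩ := a.2
    obtain ⟨hb1, hb2, hb3⟩ := b.2
    obtain ⟨hcc1, hcc2, hcc3⟩ := c.2
    by_cases ha : a.1.2 - a.1.1 + 1 < i
    · have hb : b.1.2 - b.1.1 + 1 < i := by omega
      have hc : c.1.2 - c.1.1 + 1 < i := by omega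
      rw [epsFun_pos a ha, epsFun_pos b hb, epsFun_pos c hc]; group
    by_cases hb : b.1.2 - b.1.1 + 1 < i
    · have hc : c.1.2 - c.1.1 + 1 < i := by omega
      rw [epsFun_pos b hb, epsFun_pos c hc]; group
    have hc : ¬ c.1.2 - c.1.1 + 1 < i := by omega
    have hmema : a.1 ∈ sliceSet n i n := ⟨a.2, by omega, by omega⟩
    have hmemb : b.1 ∈ sliceSet n i n := ⟨b.2, by omega, by omega⟩
    have hmemc : c.1 ∈ sliceSet n i n := ⟨c.2, by omega, by omega⟩
    rw [epsFun_neg a ha hmema, epsFun_neg b hb hmemb, epsFun_neg c hc hmemc]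
    exact cactus_rel3 (Or.inr (Or.inr
      ⟨⟨a.1, hmema⟩, ⟨b.1, hmemb⟩, ⟨c.1, hmemc⟩, hab1, hab2, hc1, hc2, rfl⟩))

/-- The map on generators defining `ι_i`. -/
noncomputable def iotaFun (n i : ℕ) (a : sliceSet n i n) : CactusGroup n :=
  PresentedGroup.of ⟨a.1, a.2.1⟩

lemma iotaFun_rels (n i : ℕ) :
    ∀ r ∈ cactusRels (sliceSet n i n), FreeGroup.lift (iotaFun n i) r = 1 := by
  rintro r (⟨a, rfl⟩ | ⟨a, b, hdisj, rfl⟩ | ⟨a, b, c, hab1, hab2, hc1, hc2, rfl⟩) <;>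
    simp only [map_mul, map_inv, FreeGroup.lift_apply_of, iotaFun]
  · exact cactus_rel1 (Or.inl ⟨⟨a.1, a.2.1⟩, rfl⟩)
  · exact cactus_rel2 (Or.inr (Or.inl ⟨⟨a.1, a.2.1⟩, ⟨b.1, b.2.1⟩, hdisj, rfl⟩))
  · exact cactus_rel3 (Or.inr (Or.inr
      ⟨⟨a.1, a.2.1⟩, ⟨b.1, b.2.1⟩, ⟨c.1, c.2.1⟩, hab1, hab2, hc1, hc2, rfl⟩))

end CactusAux


/-- For every `2 ≤ i ≤ n`: (a) the assignment `s_{p,q} ↦ 1` if `q-p+1 < i`,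
`s_{p,q} ↦ s_{p,q}` if `q-p+1 ≥ i`, extends to a surjective homomorphism
`ε_i : J_n → J_n^{i,n}`; (b) the homomorphism `ι_i : J_n^{i,n} → J_n`, `s_{p,q} ↦ s_{p,q}`,
is a section of `ε_i`; (c) `ker ε_i` is the normal closure of the set of generators of leaf
number `< i`.  In particular `J_n` is a semidirect product of `ker ε_i` by `J_n^{i,n}`. -/
theorem eraser_split_exact (n i : ℕ) (h2 : 2 ≤ i) (hin : i ≤ n) :
    ∃ (ε : CactusGroup n →* SliceCactusGroup n i n)
      (ι : SliceCactusGroup n i n →* CactusGroup n),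
      (∀ (p q : ℕ) (h : (p, q) ∈ cactusSet n),
        ε (PresentedGroup.of ⟨(p, q), h⟩) =
          if h' : q - p + 1 < i then 1
          else PresentedGroup.of ⟨(p, q), by
            obtain ⟨ha, hb, hc⟩ := h
            exact ⟨⟨ha, hb, hc⟩, by show i ≤ q - p + 1; omega, by show q - p + 1 ≤ n; omega⟩⟩) ∧
      Function.Surjective ε ∧
      (∀ (pq : ℕ × ℕ) (h' : pq ∈ sliceSet n i n),
        ι (PresentedGroup.of ⟨pq, h'⟩) = PresentedGroup.of ⟨pq, h'.1⟩) ∧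
      ε.comp ι = MonoidHom.id (SliceCactusGroup n i n) ∧
      ε.ker = Subgroup.normalClosure
        {x : CactusGroup n | ∃ (p q : ℕ) (h : (p, q) ∈ cactusSet n),
          q - p + 1 < i ∧ x = PresentedGroup.of ⟨(p, q), h⟩} := by
    classical
  refine ⟨PresentedGroup.toGroup (epsFun_rels n i), PresentedGroup.toGroup (iotaFun_rels n i),
    ?_, ?_, ?_, ?_, ?_⟩
  case _ =>
    intro p q h
    rw [PresentedGroup.toGroup.of]
    by_cases h' : q - p + 1 < i
    · rw [dif_pos h']
      exact epsFun_pos _ h'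
    · rw [dif_neg h']
      exact epsFun_neg _ h' _
  case _ =>
    -- surjectivity follows from the section; prove it directly on generators
    intro y
    refine PresentedGroup.generated_by _ ((PresentedGroup.toGroup (epsFun_rels n i)).range)
      (fun a => ?_) y
    obtain ⟨pq, hpq⟩ := a
    refine ⟨PresentedGroup.of ⟨pq, hpq.1⟩, ?_⟩
    rw [PresentedGroup.toGroup.of]
    exact epsFun_neg ⟨pq, hpq.1⟩ (by show ¬ pq.2 - pq.1 + 1 < i; have := hpq.2.1; omega) hpq
  case _ =>
    intro pq h'
    rw [PresentedGroup.toGroup.of]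
    rfl
  case _ =>
    apply PresentedGroup.ext
    intro a
    simp only [MonoidHom.comp_apply, MonoidHom.id_apply, PresentedGroup.toGroup.of, iotaFun]
    exact epsFun_neg ⟨a.1, a.2.1⟩ (by show ¬ a.1.2 - a.1.1 + 1 < i; have := a.2.2.1; omega) a.2
  case _ =>
    set ε := PresentedGroup.toGroup (epsFun_rels n i) with hε
    set T : Set (CactusGroup n) :=
      {x : CactusGroup n | ∃ (p q : ℕ) (h : (p, q) ∈ cactusSet n),
          q - p + 1 < i ∧ x = PresentedGroup.of ⟨(p, q), h⟩} with hT
    apply le_antisymm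
    · -- ker ≤ normal closure
      intro x hx
      set N := Subgroup.normalClosure T
      have key : ((QuotientGroup.mk' N).comp
          (PresentedGroup.toGroup (iotaFun_rels n i))).comp ε = QuotientGroup.mk' N := by
        apply PresentedGroup.ext
        intro a
        simp only [MonoidHom.comp_apply, hε, PresentedGroup.toGroup.of]
        by_cases h : a.1.2 - a.1.1 + 1 < i
        · rw [epsFun_pos a h, map_one, map_one]
          symm
          rw [QuotientGroup.mk'_apply, QuotientGroup.eq_one_iff]
          apply Subgroup.subset_normalClosure
          obtain ⟨⟨p, q⟩, hpq⟩ := a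
          exact ⟨p, q, hpq, h, rfl⟩
        · have hmem : a.1 ∈ sliceSet n i n := ⟨a.2, by omega, by
            obtain ⟨h1, h2, h3⟩ := a.2; omega⟩
          rw [epsFun_neg a h hmem, PresentedGroup.toGroup.of]
          rfl
      have := DFunLike.congr_fun key x
      simp only [MonoidHom.comp_apply] at this
      rw [MonoidHom.mem_ker.mp hx, map_one, map_one] at this
      rw [QuotientGroup.mk'_apply] at this
      exact (QuotientGroup.eq_one_iff x).mp this.symm
    · -- normal closure ≤ ker
      apply Subgroup.normalClosure_le_normal
      rintro x ⟨p, q, h, hlt, rfl⟩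
      rw [SetLike.mem_coe, MonoidHom.mem_ker, hε, PresentedGroup.toGroup.of]
      exact epsFun_pos _ hlt
end

section
/- The pure cactus group PJ_3 is infinite cyclic, generated by (s_{1,2} s_{1,3})³: the subgroup PJ_3 of J_3 equals the subgroup generated by the element (s_{1,2} s_{1,3})³, and this element has infinite order, so PJ_3 ≅ ℤ. -/
lemma wPerm_apply_val (n p q : ℕ) (i : Fin n) :
    ((wPerm n p q i : Fin n) : ℕ) =
      if 1 ≤ p ∧ p ≤ (i : ℕ) + 1 ∧ (i : ℕ) + 1 ≤ q ∧ q ≤ n then p + q - ((i : ℕ) + 1) - 1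
      else i := by
  rw [wPerm, Function.Involutive.coe_toPerm]
  unfold wFun
  split_ifs with h <;> rfl

lemma wPerm_inv (n p q : ℕ) : (wPerm n p q)⁻¹ = wPerm n p q := by
  simp [wPerm, Equiv.Perm.inv_def, Function.Involutive.toPerm_symm]

lemma wPerm_rels (n : ℕ) : ∀ r ∈ cactusRels (cactusSet n),
    FreeGroup.lift (fun a : cactusSet n => wPerm n a.1.1 a.1.2) r = 1 := by
  rintro r (⟨a, rfl⟩ | ⟨a, b, hab, rfl⟩ | ⟨a, b, c, h1, h2, h3, h4, rfl⟩) <;>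
    simp only [map_mul, map_inv, FreeGroup.lift_apply_of, wPerm_inv]
  · obtain ⟨ha1, ha2, ha3⟩ := a.2
    ext i
    simp only [Equiv.Perm.mul_apply, Equiv.Perm.one_apply, wPerm_apply_val]
    split_ifs <;> omega
  · obtain ⟨ha1, ha2, ha3⟩ := a.2
    obtain ⟨hb1, hb2, hb3⟩ := b.2
    ext i
    simp only [Equiv.Perm.mul_apply, Equiv.Perm.one_apply, wPerm_apply_val]
    split_ifs <;> omega
  · obtain ⟨ha1, ha2, ha3⟩ := a.2
    obtain ⟨hb1, hb2, hb3⟩ := b.2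
    obtain ⟨hc1, hc2, hc3⟩ := c.2
    ext i
    simp only [Equiv.Perm.mul_apply, Equiv.Perm.one_apply, wPerm_apply_val]
    split_ifs <;> omega

/-- The canonical projection `s : J_n → S_n`, sending `s_{p,q}` to `w_{p,q}`. -/
def sHom (n : ℕ) : CactusGroup n →* Equiv.Perm (Fin n) :=
  PresentedGroup.toGroup (f := fun a => wPerm n a.1.1 a.1.2) (wPerm_rels n)

/-- The pure cactus group `PJ_n`, i.e. the kernel of `s : J_n → S_n`. -/
abbrev PureCactusGroup (n : ℕ) : Subgroup (CactusGroup n) := (sHom n).ker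


/-- The generator `s_{1,2}` of `J_3`. -/
def s12 : CactusGroup 3 := PresentedGroup.of ⟨(1, 2), ⟨by omega, by omega, by omega⟩⟩

/-- The generator `s_{1,3}` of `J_3`. -/
def s13 : CactusGroup 3 := PresentedGroup.of ⟨(1, 3), ⟨by omega, by omega, by omega⟩⟩

section Involutions

variable {G : Type*} [Group G] {a b : G}

theorem SemiconjBy.mul_inv_of_mul_self_eq_one (ha : a * a = 1) (hb : b * b = 1) :
    SemiconjBy a (a * b) (a * b)⁻¹ := by
  rw [SemiconjBy, mul_inv_rev, inv_eq_of_mul_eq_one_right ha, inv_eq_of_mul_eq_one_right hb,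
    ← mul_assoc, ha, one_mul, mul_assoc, ha, mul_one]

theorem mul_mul_zpow_of_mul_self_eq_one (ha : a * a = 1) (hb : b * b = 1) (k : ℤ) :
    a * (a * b) ^ k = (a * b) ^ (-k) * a := by
  rw [zpow_neg, ← inv_zpow]
  exact (SemiconjBy.mul_inv_of_mul_self_eq_one ha hb).zpow_right k

theorem exists_eq_zpow_or_zpow_mul_of_mem_closure_pair (ha : a * a = 1) (hb : b * b = 1)
    {g : G} (hg : g ∈ Subgroup.closure {a, b}) :
    ∃ k : ℤ, g = (a * b) ^ k ∨ g = (a * b) ^ k * a := by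
  have hconj := mul_mul_zpow_of_mul_self_eq_one ha hb
  induction hg using Subgroup.closure_induction with
  | mem g hg =>
    rcases hg with rfl | rfl
    · exact ⟨0, .inr (by rw [zpow_zero, one_mul])⟩
    · exact ⟨-1, .inr (by rw [zpow_neg_one, mul_inv_rev, inv_mul_cancel_right,
        inv_eq_of_mul_eq_one_right hb])⟩
  | one => exact ⟨0, .inl (zpow_zero _).symm⟩
  | mul g h _ _ ihg ihh =>
    obtain ⟨j, rfl | rfl⟩ := ihg <;> obtain ⟨k, rfl | rfl⟩ := ihh
    · exact ⟨j + k, .inl (zpow_add _ j k).symm⟩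
    · exact ⟨j + k, .inr (by rw [zpow_add, mul_assoc])⟩
    · exact ⟨j - k, .inr (by rw [mul_assoc, hconj, ← mul_assoc, ← zpow_add, sub_eq_add_neg])⟩
    · refine ⟨j - k, .inl ?_⟩
      rw [mul_assoc, ← mul_assoc a, hconj, mul_assoc, ha, mul_one, ← zpow_add, sub_eq_add_neg]
  | inv g _ ih =>
    obtain ⟨k, rfl | rfl⟩ := ih
    · exact ⟨-k, .inl (zpow_neg _ k).symm⟩
    · refine ⟨k, .inr ?_⟩
      rw [mul_inv_rev, inv_eq_of_mul_eq_one_right ha, ← zpow_neg, hconj, neg_neg]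

end Involutions

namespace PartialCactusGroup

variable {C : Set (ℕ × ℕ)}

theorem of_mul_self (a : C) : (PresentedGroup.of a : PartialCactusGroup C) * .of a = 1 :=
  PresentedGroup.one_of_mem (Or.inl ⟨a, rfl⟩)

theorem of_mul_of_mul_of_eq_of_le (a b c : C) (hab₁ : a.1.1 ≤ b.1.1) (hab₂ : b.1.2 ≤ a.1.2)
    (hc₁ : c.1.1 = a.1.1 + a.1.2 - b.1.2) (hc₂ : c.1.2 = a.1.1 + a.1.2 - b.1.1) :
    (PresentedGroup.of a : PartialCactusGroup C) * .of b * .of a = .of c := by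
  have h := PresentedGroup.one_of_mem (rels := cactusRels C)
    (Or.inr (Or.inr ⟨a, b, c, hab₁, hab₂, hc₁, hc₂, rfl⟩))
  rw [map_mul, map_mul, map_mul, map_inv, map_inv, mul_inv_eq_one] at h
  have hinv : (PresentedGroup.of a : PartialCactusGroup C)⁻¹ = .of a :=
    inv_eq_of_mul_eq_one_right (of_mul_self a)
  nth_rewrite 2 [← hinv]
  exact h

/-- When the intervals in `C` pairwise overlap, relation (j2) is void and `s_{p,q} ↦ sr (p + q)`
respects (j1) and (j3): reflecting `[m,r]` inside `[p,q]` changes the sum of the endpoints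
to `2(p + q) - (m + r)`, just as conjugating `sr (m + r)` by `sr (p + q)` does. -/
def toInfDihedral (hC : ∀ a ∈ C, ∀ b ∈ C, b.1 ≤ a.2) : PartialCactusGroup C →* DihedralGroup 0 :=
  PresentedGroup.toGroup (f := fun a => .sr ((a.1.1 + a.1.2 : ℕ) : ZMod 0)) <| by
    rintro w (⟨a, rfl⟩ | ⟨a, b, hab, rfl⟩ | ⟨a, b, c, hab₁, hab₂, hc₁, hc₂, rfl⟩)
    · simp only [map_mul, FreeGroup.lift_apply_of, DihedralGroup.sr_mul_self]
    · have := hC a a.2 b b.2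
      have := hC b b.2 a a.2
      omega
    · have hsum : (c.1.1 + c.1.2 : ℕ) + (b.1.1 + b.1.2 : ℕ) = 2 * (a.1.1 + a.1.2 : ℕ) := by
        have := hC b b.2 b b.2
        omega
      have hsum' := congrArg (Nat.cast : ℕ → ZMod 0) hsum
      push_cast at hsum'
      simp only [map_mul, map_inv, FreeGroup.lift_apply_of, DihedralGroup.inv_sr,
        DihedralGroup.sr_mul_sr, DihedralGroup.r_mul_sr, ← DihedralGroup.r_zero]
      congr 1
      push_cast
      linear_combination hsum'

theorem toInfDihedral_of (hC : ∀ a ∈ C, ∀ b ∈ C, b.1 ≤ a.2) (a : C) :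
    toInfDihedral hC (.of a) = .sr ((a.1.1 + a.1.2 : ℕ) : ZMod 0) :=
  PresentedGroup.toGroup.of _

end PartialCactusGroup

theorem s12_mul_self : s12 * s12 = 1 := PartialCactusGroup.of_mul_self _

theorem s13_mul_self : s13 * s13 = 1 := PartialCactusGroup.of_mul_self _

theorem closure_s12_s13 : Subgroup.closure {s12, s13} = ⊤ := by
  refine eq_top_iff.mpr fun g _ => PresentedGroup.generated_by _ _ (fun ⟨⟨p, q⟩, hpq⟩ => ?_) g
  obtain ⟨hp, hpq', hq⟩ := hpq
  obtain ⟨rfl, rfl⟩ | ⟨rfl, rfl⟩ | ⟨rfl, rfl⟩ :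
      (p = 1 ∧ q = 2) ∨ (p = 1 ∧ q = 3) ∨ (p = 2 ∧ q = 3) := by omega
  · exact Subgroup.subset_closure (.inl rfl)
  · exact Subgroup.subset_closure (.inr rfl)
  · have hs13 : s13 ∈ Subgroup.closure {s12, s13} := Subgroup.subset_closure (.inr rfl)
    have hs12 : s12 ∈ Subgroup.closure {s12, s13} := Subgroup.subset_closure (.inl rfl)
    rw [← PartialCactusGroup.of_mul_of_mul_of_eq_of_le
      ⟨(1, 3), by simp [cactusSet]⟩ ⟨(1, 2), by simp [cactusSet]⟩ _ le_rfl (by decide) rfl rfl]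
    exact mul_mem (mul_mem hs13 hs12) hs13

theorem exists_eq_zpow_or_zpow_mul_s12 (g : CactusGroup 3) :
    ∃ k : ℤ, g = (s12 * s13) ^ k ∨ g = (s12 * s13) ^ k * s12 :=
  exists_eq_zpow_or_zpow_mul_of_mem_closure_pair s12_mul_self s13_mul_self
    (closure_s12_s13 ▸ Subgroup.mem_top g)

theorem sHom_s12 : sHom 3 s12 = wPerm 3 1 2 := PresentedGroup.toGroup.of _

theorem sHom_s13 : sHom 3 s13 = wPerm 3 1 3 := PresentedGroup.toGroup.of _

theorem orderOf_sHom_s12_mul_s13 : orderOf (sHom 3 (s12 * s13)) = 3 := by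
  rw [map_mul, sHom_s12, sHom_s13]
  exact orderOf_eq_prime (by decide) (by decide)

theorem zpow_s12_mul_s13_mem_pureCactusGroup_iff (k : ℤ) :
    (s12 * s13) ^ k ∈ PureCactusGroup 3 ↔ 3 ∣ k := by
  rw [MonoidHom.mem_ker, map_zpow, ← orderOf_dvd_iff_zpow_eq_one, orderOf_sHom_s12_mul_s13,
    Nat.cast_ofNat]

theorem zpow_s12_mul_s13_mul_s12_notMem_pureCactusGroup (k : ℤ) :
    (s12 * s13) ^ k * s12 ∉ PureCactusGroup 3 := by
  intro h
  have hsign := congrArg Equiv.Perm.sign (MonoidHom.mem_ker.mp h)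
  have hσ : Equiv.Perm.sign (wPerm 3 1 2 * wPerm 3 1 3) = 1 := by decide
  rw [map_mul, map_zpow, map_mul, map_zpow, map_mul, sHom_s12, sHom_s13, hσ, one_zpow, one_mul,
    map_one] at hsign
  exact absurd hsign (by decide)

theorem cactusSet_three_overlap : ∀ a ∈ cactusSet 3, ∀ b ∈ cactusSet 3, b.1 ≤ a.2 := by
  rintro ⟨p, q⟩ ⟨hp, hpq, hq⟩ ⟨m, r⟩ ⟨hm, hmr, hr⟩
  dsimp only
  omega

theorem toInfDihedral_s12_mul_s13 :
    PartialCactusGroup.toInfDihedral cactusSet_three_overlap (s12 * s13) = DihedralGroup.r 1 := by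
  rw [map_mul, s12, s13, PartialCactusGroup.toInfDihedral_of,
    PartialCactusGroup.toInfDihedral_of, DihedralGroup.sr_mul_sr]
  norm_num

theorem not_isOfFinOrder_s12_mul_s13 : ¬IsOfFinOrder (s12 * s13) := by
  intro h
  have himage := (PartialCactusGroup.toInfDihedral cactusSet_three_overlap).isOfFinOrder h
  rw [toInfDihedral_s12_mul_s13, ← orderOf_ne_zero_iff, DihedralGroup.orderOf_r_one] at himage
  exact himage rfl

/-- The pure cactus group `PJ_3` is infinite cyclic, generated by
`(s_{1,2} s_{1,3})³`. -/
theorem pj3_infinite_cyclic :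
    PureCactusGroup 3 = Subgroup.zpowers ((s12 * s13) ^ 3) ∧
    ¬ IsOfFinOrder ((s12 * s13) ^ 3) := by
  refine ⟨le_antisymm ?_ ?_, ?_⟩
  · intro g hg
    obtain ⟨k, rfl | rfl⟩ := exists_eq_zpow_or_zpow_mul_s12 g
    · obtain ⟨m, rfl⟩ := (zpow_s12_mul_s13_mem_pureCactusGroup_iff k).mp hg
      exact ⟨m, by dsimp only; rw [← zpow_natCast, ← zpow_mul, Nat.cast_ofNat]⟩
    · exact absurd hg (zpow_s12_mul_s13_mul_s12_notMem_pureCactusGroup k)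
  · rw [Subgroup.zpowers_le, ← zpow_natCast]
    exact (zpow_s12_mul_s13_mem_pureCactusGroup_iff _).mpr dvd_rfl
  · rw [isOfFinOrder_pow]
    simpa using not_isOfFinOrder_s12_mul_s13
end
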